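/- arXiv:1702.00561 — 13 statements merged into one kernel-verified Lean document; each statement's English description precedes it below -/
import Mathlib

section
/- Let G and H be finite groups with gcd(|G|,|H|) = 1, so that Aut(G × H) ≅ Aut(G) × Aut(H). Then for any (g,h) ∈ G × H, Pr_{(g,h)}(G × H, Aut(G × H)) = Pr_g(G,Aut(G)) · Pr_h(H,Aut(H)). -/
open MulAction

/-- The absolute center L(G): elements fixed by every automorphism. -/
def absCenter (G : Type*) [Group G] : Subgroup G where
  carrier := {x | ∀ α : MulAut G, α x = x}
  one_mem' := fun α => map_one α
  mul_mem' := fun {a b} ha hb α => by rw [map_mul, ha α, hb α]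
  inv_mem' := fun {a} ha α => by rw [map_inv, ha α]

instance absCenter_normal (G : Type*) [Group G] : (absCenter G).Normal where
  conj_mem n hn g := by
    have h : g * n * g⁻¹ = n := by
      have := hn (MulAut.conj g)
      rwa [MulAut.conj_apply] at this
    rw [h]; exact hn

/-- Pr_g(G, Aut(G)): probability that a random pair (x, α) satisfies x⁻¹·α(x) = g. -/
noncomputable def autPr (G : Type*) [Group G] (g : G) : ℚ :=
  (Nat.card {p : G × MulAut G // p.1⁻¹ * p.2 p.1 = g} : ℚ) /
    ((Nat.card G : ℚ) * (Nat.card (MulAut G) : ℚ))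

section aux

variable {G H : Type*} [Group G] [Group H] [Finite G] [Finite H]

lemma aux_snd (hcop : (Nat.card G).Coprime (Nat.card H)) (α : MulAut (G × H)) (g : G) :
    (α (g, 1)).2 = 1 := by
  rw [← orderOf_eq_one_iff]
  have h1 : orderOf ((α (g, 1)).2) ∣ Nat.card G := by
    have d1 : orderOf ((α (g, 1)).2) ∣ orderOf (α (g, 1)) :=
      orderOf_map_dvd (MonoidHom.snd G H) _
    have d2 : orderOf (α (g, 1)) = orderOf ((g, 1) : G × H) := orderOf_injective
      α.toMonoidHom α.injective _
    have d3 : orderOf ((g, 1) : G × H) ∣ Nat.card G := by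
      have : ((g, 1) : G × H) = MonoidHom.inl G H g := rfl
      rw [this, orderOf_injective (MonoidHom.inl G H) (by
        intro a b hab; simpa using congrArg Prod.fst hab)]
      exact orderOf_dvd_natCard g
    exact d2 ▸ d1 |>.trans d3
  have h2 : orderOf ((α (g, 1)).2) ∣ Nat.card H := orderOf_dvd_natCard _
  exact Nat.eq_one_of_dvd_coprimes hcop h1 h2

lemma aux_fst (hcop : (Nat.card G).Coprime (Nat.card H)) (α : MulAut (G × H)) (h : H) :
    (α (1, h)).1 = 1 := by
  rw [← orderOf_eq_one_iff]
  have h1 : orderOf ((α (1, h)).1) ∣ Nat.card H := by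
    have d1 : orderOf ((α (1, h)).1) ∣ orderOf (α (1, h)) :=
      orderOf_map_dvd (MonoidHom.fst G H) _
    have d2 : orderOf (α (1, h)) = orderOf ((1, h) : G × H) := orderOf_injective
      α.toMonoidHom α.injective _
    have d3 : orderOf ((1, h) : G × H) ∣ Nat.card H := by
      have : ((1, h) : G × H) = MonoidHom.inr G H h := rfl
      rw [this, orderOf_injective (MonoidHom.inr G H) (by
        intro a b hab; simpa using congrArg Prod.snd hab)]
      exact orderOf_dvd_natCard h
    exact d2 ▸ d1 |>.trans d3
  have h2 : orderOf ((α (1, h)).1) ∣ Nat.card G := orderOf_dvd_natCard _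
  exact Nat.eq_one_of_dvd_coprimes hcop.symm h1 h2

/-- The first-component automorphism extracted from an automorphism of `G × H`. -/
def autFst (hcop : (Nat.card G).Coprime (Nat.card H)) (α : MulAut (G × H)) : MulAut G where
  toFun g := (α (g, 1)).1
  invFun g := (α.symm (g, 1)).1
  left_inv g := by
    have h1 : α (g, 1) = ((α (g, 1)).1, 1) := by
      ext
      · rfl
      · exact aux_snd hcop α g
    show (α.symm ((α (g, 1)).1, 1)).1 = g
    rw [← h1, α.symm_apply_apply]
  right_inv g := by
    have h1 : α.symm (g, 1) = ((α.symm (g, 1)).1, 1) := by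
      ext
      · rfl
      · exact aux_snd hcop α.symm g
    show (α ((α.symm (g, 1)).1, 1)).1 = g
    rw [← h1, α.apply_symm_apply]
  map_mul' a b := by
    show (α (a * b, 1)).1 = (α (a, 1)).1 * (α (b, 1)).1
    have h1 : ((a * b, 1) : G × H) = (a, 1) * (b, 1) := by simp
    rw [h1, map_mul]; rfl

/-- The second-component automorphism extracted from an automorphism of `G × H`. -/
def autSnd (hcop : (Nat.card G).Coprime (Nat.card H)) (α : MulAut (G × H)) : MulAut H where
  toFun h := (α (1, h)).2
  invFun h := (α.symm (1, h)).2
  left_inv h := by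
    have h1 : α (1, h) = (1, (α (1, h)).2) := by
      ext
      · exact aux_fst hcop α h
      · rfl
    show (α.symm (1, (α (1, h)).2)).2 = h
    rw [← h1, α.symm_apply_apply]
  right_inv h := by
    have h1 : α.symm (1, h) = (1, (α.symm (1, h)).2) := by
      ext
      · exact aux_fst hcop α.symm h
      · rfl
    show (α (1, (α.symm (1, h)).2)).2 = h
    rw [← h1, α.apply_symm_apply]
  map_mul' a b := by
    show (α (1, a * b)).2 = (α (1, a)).2 * (α (1, b)).2
    have h1 : ((1, a * b) : G × H) = (1, a) * (1, b) := by simp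
    rw [h1, map_mul]; rfl

lemma aut_apply (hcop : (Nat.card G).Coprime (Nat.card H)) (α : MulAut (G × H))
    (x : G) (y : H) : α (x, y) = (autFst hcop α x, autSnd hcop α y) := by
  have : ((x, y) : G × H) = (x, 1) * (1, y) := by simp
  rw [this, map_mul]
  ext
  · show (α (x, 1)).1 * (α (1, y)).1 = _
    rw [aux_fst hcop α y, mul_one]; rfl
  · show (α (x, 1)).2 * (α (1, y)).2 = _
    rw [aux_snd hcop α x, one_mul]; rfl

/-- `Aut (G × H) ≃ Aut G × Aut H` for coprime orders. -/
def autEquiv (hcop : (Nat.card G).Coprime (Nat.card H)) :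
    MulAut (G × H) ≃ MulAut G × MulAut H where
  toFun α := (autFst hcop α, autSnd hcop α)
  invFun p := MulEquiv.prodCongr p.1 p.2
  left_inv α := by
    ext x
    · exact (congrArg Prod.fst (aut_apply hcop α x.1 x.2)).symm
    · exact (congrArg Prod.snd (aut_apply hcop α x.1 x.2)).symm
  right_inv p := by
    ext x
    · show ((MulEquiv.prodCongr p.1 p.2) (x, 1)).1 = p.1 x
      simp [MulEquiv.prodCongr]
    · show ((MulEquiv.prodCongr p.1 p.2) (1, x)).2 = p.2 x
      simp [MulEquiv.prodCongr]

end aux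

theorem stmt6 {G H : Type*} [Group G] [Group H] [Finite G] [Finite H]
    (hcop : (Nat.card G).Coprime (Nat.card H)) (g : G) (h : H) :
    autPr (G × H) (g, h) = autPr G g * autPr H h := by
  have key : Nat.card {p : (G × H) × MulAut (G × H) // p.1⁻¹ * p.2 p.1 = (g, h)} =
      Nat.card {p : G × MulAut G // p.1⁻¹ * p.2 p.1 = g} *
      Nat.card {p : H × MulAut H // p.1⁻¹ * p.2 p.1 = h} := by
    rw [← Nat.card_prod]
    apply Nat.card_congr
    refine Equiv.trans ?_ Equiv.subtypeProdEquivProd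
    refine Equiv.subtypeEquiv
      (((Equiv.refl (G × H)).prodCongr (autEquiv hcop)).trans (Equiv.prodProdProdComm G H _ _)) ?_
    rintro ⟨⟨x, y⟩, α⟩
    show (x, y)⁻¹ * α (x, y) = (g, h) ↔
      (x⁻¹ * autFst hcop α x = g ∧ y⁻¹ * autSnd hcop α y = h)
    rw [aut_apply hcop α x y, Prod.inv_mk, Prod.mk_mul_mk, Prod.mk.injEq]
  have cardAut : Nat.card (MulAut (G × H)) = Nat.card (MulAut G) * Nat.card (MulAut H) := by
    rw [Nat.card_congr (autEquiv hcop), Nat.card_prod]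
  unfold autPr
  rw [key, cardAut, Nat.card_prod]
  push_cast
  rw [div_mul_div_comm]
  ring_nf
end

section
/- For a finite group G: Pr(G,Aut(G)) ≥ |L(G)|/|G| + |C_{Aut(G)}(G)|·(|G| − |L(G)|)/(|G|·|Aut(G)|), where L(G) = {x ∈ G : α(x) = x for all α ∈ Aut(G)} and C_{Aut(G)}(G) = {α ∈ Aut(G) : α(x) = x for all x ∈ G}. -/
open MulAction

theorem stmt7 {G : Type*} [Group G] [Finite G] :
    autPr G 1 ≥ (Nat.card (absCenter G) : ℚ) / (Nat.card G : ℚ) +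
      (Nat.card {α : MulAut G // ∀ x : G, α x = x} : ℚ) *
        ((Nat.card G : ℚ) - (Nat.card (absCenter G) : ℚ)) /
          ((Nat.card G : ℚ) * (Nat.card (MulAut G) : ℚ)) := by
  classical
  set L := absCenter G
  set S := {p : G × MulAut G // p.1⁻¹ * p.2 p.1 = 1}
  set C := {α : MulAut G // ∀ x : G, α x = x}
  -- injection
  have key : Nat.card L * Nat.card (MulAut G) + Nat.card C * Nat.card {x : G // x ∉ L} ≤ Nat.card S := by
    have hinj : Function.Injective
        (fun q : (L × MulAut G) ⊕ (C × {x : G // x ∉ L}) =>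
          (Sum.elim
            (fun p : L × MulAut G => (⟨((p.1 : G), p.2), by
              simp [p.1.2 p.2]⟩ : S))
            (fun p : C × {x : G // x ∉ L} => (⟨((p.2 : G), (p.1 : MulAut G)), by
              simp [p.1.2]⟩ : S)) q)) := by
      rintro (⟨x, α⟩ | ⟨α, x⟩) (⟨y, β⟩ | ⟨β, y⟩) h <;>
        simp only [Sum.elim_inl, Sum.elim_inr, Subtype.mk.injEq, Prod.mk.injEq] at h
      · obtain ⟨h1, h2⟩ := h
        simp [Subtype.ext h1, h2]
      · exact absurd (h.1 ▸ x.2) y.2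
      · exact absurd (h.1.symm ▸ y.2) x.2
      · obtain ⟨h1, h2⟩ := h
        simp [Subtype.ext h1, Subtype.ext h2]
    have := Nat.card_le_card_of_injective _ hinj
    simpa [Nat.card_sum, Nat.card_prod, mul_comm] using this
  have hcompl : Nat.card L + Nat.card {x : G // x ∉ L} = Nat.card G := by
    have : Fintype G := Fintype.ofFinite G
    simp only [Nat.card_eq_fintype_card]
    rw [Fintype.card_subtype_compl (p := fun x => x ∈ L)]
    have := Fintype.card_subtype_le (fun x : G => x ∈ L)
    omega
  have hG : (0:ℚ) < Nat.card G := by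
    exact_mod_cast Nat.card_pos
  have hA : (0:ℚ) < Nat.card (MulAut G) := by
    have : Finite (MulAut G) := inferInstance
    exact_mod_cast Nat.card_pos
  have hle : (Nat.card L : ℚ) * Nat.card (MulAut G) + Nat.card C * Nat.card {x : G // x ∉ L}
      ≤ (Nat.card S : ℚ) := by exact_mod_cast key
  have hc : (Nat.card {x : G // x ∉ L} : ℚ) = Nat.card G - Nat.card L := by
    have := hcompl
    push_cast [← this]
    ring
  rw [hc] at hle
  rw [ge_iff_le, autPr]
  rw [div_add_div _ _ (ne_of_gt hG) (ne_of_gt (mul_pos hG hA)), div_le_div_iff₀ (by positivity) (by positivity)]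
  nlinarith [mul_le_mul_of_nonneg_right hle (mul_nonneg (mul_nonneg hG.le hG.le) hA.le)]
end

section
/- Let G be a finite group and g ∈ G an element of the form x⁻¹·α(x) for some x ∈ G, α ∈ Aut(G), with g ≠ 1. Then Pr_g(G,Aut(G)) ≥ |L(G)|·|C_{Aut(G)}(G)| / (|G|·|Aut(G)|). -/
open MulAction

theorem stmt8 {G : Type*} [Group G] [Finite G] (g : G) (hg : g ≠ 1)
    (hS : ∃ (x : G) (α : MulAut G), x⁻¹ * α x = g) :
    autPr G g ≥ (Nat.card (absCenter G) : ℚ) *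
        (Nat.card {α : MulAut G // ∀ x : G, α x = x} : ℚ) /
      ((Nat.card G : ℚ) * (Nat.card (MulAut G) : ℚ)) := by
  obtain ⟨x₀, α₀, h₀⟩ := hS
  set f : absCenter G × {α : MulAut G // ∀ x : G, α x = x} →
      {p : G × MulAut G // p.1⁻¹ * p.2 p.1 = g} := fun p =>
    ⟨(p.1.1 * x₀, p.2.1 * α₀), by
      obtain ⟨⟨z, hz⟩, ⟨β, hβ⟩⟩ := p
      simp only [MulAut.mul_apply, map_mul, hβ, hz α₀]
      group
      simpa using h₀⟩
  have hinj : Function.Injective f := by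
    rintro ⟨⟨z1, h1⟩, ⟨β1, hb1⟩⟩ ⟨⟨z2, h2⟩, ⟨β2, hb2⟩⟩ h
    simp only [f, Subtype.mk_eq_mk, Prod.mk.injEq, mul_left_inj] at h
    simp [Subtype.ext_iff, Prod.ext_iff, h.1, h.2]
  have hle : Nat.card (absCenter G) * Nat.card {α : MulAut G // ∀ x : G, α x = x}
      ≤ Nat.card {p : G × MulAut G // p.1⁻¹ * p.2 p.1 = g} := by
    rw [← Nat.card_prod]
    exact Nat.card_le_card_of_injective f hinj
  have hG : (0 : ℚ) < Nat.card G := by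
    exact_mod_cast Nat.card_pos
  have hA : (0 : ℚ) < Nat.card (MulAut G) := by
    exact_mod_cast Nat.card_pos
  unfold autPr
  apply div_le_div_of_nonneg_right ?_ (by positivity) |>.trans_eq rfl
  exact_mod_cast hle
end

section
/- For a finite group G and g ∈ G: Pr_g(G,Aut(G)) ≤ Pr(G,Aut(G)) = Pr_1(G,Aut(G)), with equality if and only if g = 1. -/
open MulAction

section Aux

variable {G : Type*} [Group G] [Finite G]

open Classical in
/-- a base point in the fiber over α, if one exists -/
noncomputable def basePt (g : G) (α : MulAut G) : G :=
  if h : ∃ x : G, x⁻¹ * α x = g then h.choose else 1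

lemma basePt_spec {g : G} {α : MulAut G} (h : ∃ x : G, x⁻¹ * α x = g) :
    (basePt g α)⁻¹ * α (basePt g α) = g := by
  classical rw [basePt, dif_pos h]; exact h.choose_spec

noncomputable def toFix (g : G)
    (p : {p : G × MulAut G // p.1⁻¹ * p.2 p.1 = g}) :
    {p : G × MulAut G // p.1⁻¹ * p.2 p.1 = 1} := by
  refine ⟨(p.1.1 * (basePt g p.1.2)⁻¹, p.1.2), ?_⟩
  have hb : (basePt g p.1.2)⁻¹ * p.1.2 (basePt g p.1.2) = g :=
    basePt_spec ⟨p.1.1, p.2⟩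
  have hx : p.1.2 p.1.1 = p.1.1 * g := inv_mul_eq_iff_eq_mul.mp p.2
  have hb' : p.1.2 (basePt g p.1.2) = basePt g p.1.2 * g :=
    inv_mul_eq_iff_eq_mul.mp hb
  simp only [map_mul, map_inv, hx, hb']
  group

lemma toFix_injective (g : G) : Function.Injective (toFix g) := by
  rintro ⟨⟨x, α⟩, hx⟩ ⟨⟨y, β⟩, hy⟩ h
  simp only [toFix, Subtype.mk.injEq, Prod.mk.injEq] at h
  obtain ⟨h1, h2⟩ := h
  subst h2
  apply Subtype.ext
  simp only [Prod.mk.injEq, and_true]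
  exact mul_right_cancel h1

lemma card_lt (g : G) (hg : g ≠ 1) :
    Nat.card {p : G × MulAut G // p.1⁻¹ * p.2 p.1 = g} <
    Nat.card {p : G × MulAut G // p.1⁻¹ * p.2 p.1 = 1} := by
  have hns : ¬ Function.Surjective (toFix g) := by
    intro hs
    obtain ⟨⟨⟨x, α⟩, hx⟩, hmap⟩ := hs ⟨((1 : G), (1 : MulAut G)), by simp⟩
    simp only [toFix, Subtype.mk.injEq, Prod.mk.injEq] at hmap
    obtain ⟨-, h2⟩ := hmap
    subst h2
    simp only [MulAut.one_apply, inv_mul_cancel] at hx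
    exact hg hx.symm
  classical
  have := Fintype.ofFinite {p : G × MulAut G // p.1⁻¹ * p.2 p.1 = g}
  have := Fintype.ofFinite {p : G × MulAut G // p.1⁻¹ * p.2 p.1 = 1}
  rw [Nat.card_eq_fintype_card, Nat.card_eq_fintype_card]
  exact Fintype.card_lt_of_injective_not_surjective (toFix g)
    (toFix_injective g) hns

end Aux

theorem stmt9 {G : Type*} [Group G] [Finite G] (g : G)
    (hL : absCenter G ≠ ⊤) :
    autPr G g ≤ autPr G 1 ∧ (autPr G g = autPr G 1 ↔ g = 1) := by
  have hD : (0 : ℚ) < (Nat.card G : ℚ) * (Nat.card (MulAut G) : ℚ) := by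
    have h1 : 0 < Nat.card G := Nat.card_pos
    have h2 : 0 < Nat.card (MulAut G) := Nat.card_pos
    positivity
  by_cases hg : g = 1
  · subst hg; exact ⟨le_refl _, by simp⟩
  · have hlt : autPr G g < autPr G 1 := by
      unfold autPr
      rw [div_lt_div_iff_of_pos_right hD]
      exact_mod_cast card_lt g hg
    exact ⟨hlt.le, ⟨fun h => absurd h hlt.ne, fun h => absurd h hg⟩⟩
end

section
/- Let G be a finite group, p the smallest prime dividing |Aut(G)|, and g ∈ G with g ≠ 1. Then Pr_g(G,Aut(G)) ≤ (|G| − |L(G)|)/(p·|G|) < 1/p. -/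
open MulAction

theorem stmt10 {G : Type*} [Group G] [Finite G] (g : G) (hg : g ≠ 1)
    (p : ℕ) (hp : p.Prime) (hpd : p ∣ Nat.card (MulAut G))
    (hmin : ∀ r : ℕ, r.Prime → r ∣ Nat.card (MulAut G) → p ≤ r) :
    autPr G g ≤ ((Nat.card G : ℚ) - (Nat.card (absCenter G) : ℚ)) /
        ((p : ℚ) * (Nat.card G : ℚ)) ∧
    ((Nat.card G : ℚ) - (Nat.card (absCenter G) : ℚ)) /
        ((p : ℚ) * (Nat.card G : ℚ)) < 1 / (p : ℚ) := by
  classical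
  cases nonempty_fintype G
  cases nonempty_fintype (MulAut G)
  have hn : 0 < Nat.card G := Nat.card_pos
  have ha : 0 < Nat.card (MulAut G) := Nat.card_pos
  have hl : 0 < Nat.card (absCenter G) := Nat.card_pos
  have hln : Nat.card (absCenter G) ≤ Nat.card G :=
    Nat.card_le_card_of_injective _ (absCenter G).subtype_injective
  -- per-element bound
  have key : ∀ x : G, Nat.card {α : MulAut G // α x = x * g} * p ≤
      (if (x ∈ absCenter G) then 0 else Nat.card (MulAut G)) := by
    intro x
    by_cases hxe : ∃ β : MulAut G, β x = x * g
    · obtain ⟨β, hβ⟩ := hxe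
      have hxL : x ∉ absCenter G := by
        intro hxL
        have hfix : β x = x := hxL β
        rw [hfix] at hβ
        exact hg (by simpa using hβ.symm)
      rw [if_neg hxL]
      have e : {α : MulAut G // α x = x * g} ≃ MulAction.stabilizer (MulAut G) x :=
        { toFun := fun α => ⟨β⁻¹ * α.1, by
            have : (β⁻¹ * α.1) x = x := by
              rw [MulAut.mul_apply, α.2, ← hβ]
              simp
            exact this⟩
          invFun := fun σ => ⟨β * σ.1, by
            have hσ : σ.1 x = x := σ.2
            rw [MulAut.mul_apply, hσ, hβ]⟩
          left_inv := fun α => by ext1; group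
          right_inv := fun σ => by ext1; group }
      have hcard : Nat.card {α : MulAut G // α x = x * g} =
          Nat.card (MulAction.stabilizer (MulAut G) x) := Nat.card_congr e
      have horb : Nat.card (MulAction.orbit (MulAut G) x) *
          Nat.card (MulAction.stabilizer (MulAut G) x) = Nat.card (MulAut G) := by
        simp only [Nat.card_eq_fintype_card]
        exact MulAction.card_orbit_mul_card_stabilizer_eq_card_group (MulAut G) x
      have horb2 : 1 < Nat.card (MulAction.orbit (MulAut G) x) := by
        have h1 : x ∈ MulAction.orbit (MulAut G) x := MulAction.mem_orbit_self x
        have h2 : x * g ∈ MulAction.orbit (MulAut G) x := ⟨β, hβ⟩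
        refine Finite.one_lt_card_iff_nontrivial.mpr ⟨⟨x * g, h2⟩, ⟨x, h1⟩, ?_⟩
        intro h
        apply hg
        have : x * g = x := congrArg Subtype.val h
        simpa using this
      have hdvd : Nat.card (MulAction.orbit (MulAut G) x) ∣ Nat.card (MulAut G) :=
        ⟨_, horb.symm⟩
      have hple : p ≤ Nat.card (MulAction.orbit (MulAut G) x) := by
        have hm := Nat.minFac_prime horb2.ne'
        have h1 := hmin _ hm (dvd_trans (Nat.minFac_dvd _) hdvd)
        exact h1.trans (Nat.minFac_le (by omega))
      calc Nat.card {α : MulAut G // α x = x * g} * p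
          = p * Nat.card (MulAction.stabilizer (MulAut G) x) := by rw [hcard]; ring
        _ ≤ Nat.card (MulAction.orbit (MulAut G) x) *
              Nat.card (MulAction.stabilizer (MulAut G) x) :=
            Nat.mul_le_mul_right _ hple
        _ = Nat.card (MulAut G) := horb
    · have hz : Nat.card {α : MulAut G // α x = x * g} = 0 := by
        have : IsEmpty {α : MulAut G // α x = x * g} := ⟨fun α => hxe ⟨α.1, α.2⟩⟩
        exact Nat.card_of_isEmpty
      rw [hz]
      split_ifs <;> omega
  -- global counting bound
  have hsum : Nat.card {q : G × MulAut G // q.1⁻¹ * q.2 q.1 = g} * p ≤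
      (Nat.card G - Nat.card (absCenter G)) * Nat.card (MulAut G) := by
    have e : {q : G × MulAut G // q.1⁻¹ * q.2 q.1 = g} ≃
        Σ x : G, {α : MulAut G // α x = x * g} := by
      refine (Equiv.subtypeEquivRight ?_).trans
        (Equiv.subtypeProdEquivSigmaSubtype fun (x : G) (α : MulAut G) => α x = x * g)
      intro q
      rw [inv_mul_eq_iff_eq_mul]
    have hS : Nat.card {q : G × MulAut G // q.1⁻¹ * q.2 q.1 = g} =
        ∑ x : G, Nat.card {α : MulAut G // α x = x * g} := by
      rw [Nat.card_congr e]
      simp [Nat.card_eq_fintype_card, Fintype.card_sigma]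
    rw [hS, Finset.sum_mul]
    calc ∑ x : G, Nat.card {α : MulAut G // α x = x * g} * p
        ≤ ∑ x : G, (if (x ∈ absCenter G) then 0 else Nat.card (MulAut G)) :=
          Finset.sum_le_sum fun x _ => key x
      _ = (Nat.card G - Nat.card (absCenter G)) * Nat.card (MulAut G) := by
          rw [Finset.sum_ite, Finset.sum_const, Finset.sum_const]
          simp only [smul_eq_mul, mul_zero, zero_add]
          have h2 : (Finset.univ.filter (fun x => x ∈ absCenter G)).card =
              Nat.card (absCenter G) := by
            rw [Nat.card_eq_fintype_card, Fintype.card_subtype]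
          have h1 : (Finset.univ.filter (fun x => ¬ x ∈ absCenter G)).card =
              Nat.card G - Nat.card (absCenter G) := by
            rw [Finset.filter_not, Finset.card_sdiff_of_subset (Finset.filter_subset _ _),
              Finset.card_univ, h2]
            simp [Nat.card_eq_fintype_card]
          rw [h1]
  have hnq : (0 : ℚ) < Nat.card G := by exact_mod_cast hn
  have haq : (0 : ℚ) < Nat.card (MulAut G) := by exact_mod_cast ha
  have hpq : (0 : ℚ) < p := by exact_mod_cast hp.pos
  have hlq : (1 : ℚ) ≤ Nat.card (absCenter G) := by exact_mod_cast hl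
  have hlnq : (Nat.card (absCenter G) : ℚ) ≤ Nat.card G := by exact_mod_cast hln
  have hsumq : (Nat.card {q : G × MulAut G // q.1⁻¹ * q.2 q.1 = g} : ℚ) * p ≤
      ((Nat.card G : ℚ) - Nat.card (absCenter G)) * Nat.card (MulAut G) := by
    have := hsum
    have h2 : ((Nat.card G - Nat.card (absCenter G) : ℕ) : ℚ) =
        (Nat.card G : ℚ) - Nat.card (absCenter G) := by
      rw [Nat.cast_sub hln]
    calc (Nat.card {q : G × MulAut G // q.1⁻¹ * q.2 q.1 = g} : ℚ) * p
        = ((Nat.card {q : G × MulAut G // q.1⁻¹ * q.2 q.1 = g} * p : ℕ) : ℚ) := by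
          push_cast; ring
      _ ≤ (((Nat.card G - Nat.card (absCenter G)) * Nat.card (MulAut G) : ℕ) : ℚ) := by
          exact_mod_cast hsum
      _ = ((Nat.card G : ℚ) - Nat.card (absCenter G)) * Nat.card (MulAut G) := by
          rw [Nat.cast_mul, h2]
  constructor
  · rw [autPr, div_le_div_iff₀ (by positivity) (by positivity)]
    nlinarith [hsumq, hnq, mul_le_mul_of_nonneg_right hsumq (le_of_lt hnq)]
  · rw [div_lt_div_iff₀ (by positivity) hpq]
    nlinarith [hpq, hlq, hnq]
end

section
/- Let G be a finite group, p the smallest prime dividing |Aut(G)|, and X_G = {x ∈ G : C_{Aut(G)}(x) = {id}}. Then Pr(G,Aut(G)) ≥ |L(G)|/|G| + (p(|G| − |X_G| − |L(G)|) + |X_G|)/(|G|·|Aut(G)|) and Pr(G,Aut(G)) ≤ ((p−1)|L(G)| + |G|)/(p|G|) − |X_G|(|Aut(G)| − p)/(p·|G|·|Aut(G)|). -/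
open MulAction

theorem stmt11 {G : Type*} [Group G] [Finite G]
    (p : ℕ) (hp : p.Prime) (hpd : p ∣ Nat.card (MulAut G))
    (hmin : ∀ r : ℕ, r.Prime → r ∣ Nat.card (MulAut G) → p ≤ r) :
    autPr G 1 ≥ (Nat.card (absCenter G) : ℚ) / (Nat.card G : ℚ) +
      ((p : ℚ) * ((Nat.card G : ℚ) - (Nat.card {x : G // stabilizer (MulAut G) x = ⊥} : ℚ)
          - (Nat.card (absCenter G) : ℚ)) +
        (Nat.card {x : G // stabilizer (MulAut G) x = ⊥} : ℚ)) /
        ((Nat.card G : ℚ) * (Nat.card (MulAut G) : ℚ)) ∧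
    autPr G 1 ≤ (((p : ℚ) - 1) * (Nat.card (absCenter G) : ℚ) + (Nat.card G : ℚ)) /
        ((p : ℚ) * (Nat.card G : ℚ)) -
      (Nat.card {x : G // stabilizer (MulAut G) x = ⊥} : ℚ) *
          ((Nat.card (MulAut G) : ℚ) - (p : ℚ)) /
        ((p : ℚ) * (Nat.card G : ℚ) * (Nat.card (MulAut G) : ℚ)) := by
  classical
  have hfG := Fintype.ofFinite G
  simp only [autPr]
  set A := MulAut G with hA
  have hfA := Fintype.ofFinite A
  set m : ℕ := Nat.card A with hm
  have hmpos : 0 < m := Nat.card_pos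
  have hpm : p ≤ m := Nat.le_of_dvd hmpos hpd
  have hm1 : 1 < m := lt_of_lt_of_le hp.one_lt hpm
  -- counting lemma
  have hcount : Nat.card {q : G × A // q.1⁻¹ * q.2 q.1 = 1}
      = ∑ x : G, Nat.card (stabilizer A x) := by
    have e : {q : G × A // q.1⁻¹ * q.2 q.1 = 1} ≃ Σ x : G, stabilizer A x :=
      (Equiv.subtypeProdEquivSigmaSubtype (fun (x : G) (α : A) => x⁻¹ * α x = 1)).trans
        (Equiv.sigmaCongrRight fun x => Equiv.subtypeEquivRight fun α => by
          rw [inv_mul_eq_one, MulAction.mem_stabilizer_iff, MulAut.smul_def, eq_comm])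
    rw [Nat.card_congr e, Nat.card_eq_fintype_card, Fintype.card_sigma]
    exact Finset.sum_congr rfl fun x _ => (Nat.card_eq_fintype_card).symm
  -- membership characterization of the absolute center
  have habs : ∀ x : G, x ∈ absCenter G ↔ stabilizer A x = ⊤ := by
    intro x
    rw [Subgroup.eq_top_iff']
    constructor
    · intro h α
      rw [MulAction.mem_stabilizer_iff, MulAut.smul_def]
      exact h α
    · intro h α
      have := h α
      rwa [MulAction.mem_stabilizer_iff, MulAut.smul_def] at this
  -- per-element bounds in the middle case
  have hmid : ∀ x : G, stabilizer A x ≠ ⊥ → stabilizer A x ≠ ⊤ →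
      p ≤ Nat.card (stabilizer A x) ∧ Nat.card (stabilizer A x) * p ≤ m := by
    intro x hb ht
    have hd : Nat.card (stabilizer A x) ∣ m := Subgroup.card_subgroup_dvd_card _
    have hpos : 0 < Nat.card (stabilizer A x) := Nat.card_pos
    have hne1 : Nat.card (stabilizer A x) ≠ 1 := fun h => hb (Subgroup.card_eq_one.mp h)
    constructor
    · exact le_trans (hmin _ (Nat.minFac_prime hne1) (dvd_trans (Nat.minFac_dvd _) hd))
        (Nat.minFac_le hpos)
    · have hidx : Nat.card (stabilizer A x) * (stabilizer A x).index = m :=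
        Subgroup.card_mul_index _
      have hin0 : (stabilizer A x).index ≠ 0 := Subgroup.index_ne_zero_of_finite
      have hin1 : (stabilizer A x).index ≠ 1 := fun h => ht (Subgroup.index_eq_one.mp h)
      have hip : p ≤ (stabilizer A x).index :=
        le_trans (hmin _ (Nat.minFac_prime hin1)
            (dvd_trans (Nat.minFac_dvd _) (Subgroup.index_dvd_card _)))
          (Nat.minFac_le (Nat.pos_of_ne_zero hin0))
      calc Nat.card (stabilizer A x) * p
          ≤ Nat.card (stabilizer A x) * (stabilizer A x).index :=
            Nat.mul_le_mul_left _ hip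
        _ = m := hidx
  -- finset partition
  set L : Finset G := Finset.univ.filter (fun x => stabilizer A x = ⊤) with hLdef
  set X : Finset G := Finset.univ.filter (fun x => stabilizer A x = ⊥) with hXdef
  set R : Finset G := Finset.univ.filter
    (fun x => ¬ stabilizer A x = ⊤ ∧ ¬ stabilizer A x = ⊥) with hRdef
  have hbt : (⊥ : Subgroup A) ≠ ⊤ := by
    intro h
    have : (1 : ℕ) = m := by rw [← Subgroup.card_bot (G := A), h, Subgroup.card_top]
    omega
  -- generic sum splitting over the partition
  have hsplitgen : ∀ g : G → ℕ,
      ∑ x : G, g x = (∑ x ∈ L, g x) + ((∑ x ∈ X, g x) + (∑ x ∈ R, g x)) := by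
    intro g
    have hdXR : Disjoint X R := by
      rw [Finset.disjoint_left]
      intro x hx hx'
      simp only [hXdef, Finset.mem_filter] at hx
      simp only [hRdef, Finset.mem_filter] at hx'
      exact hx'.2.2 hx.2
    have hdL : Disjoint L (X ∪ R) := by
      rw [Finset.disjoint_left]
      intro x hx hx'
      simp only [hLdef, Finset.mem_filter] at hx
      simp only [hXdef, hRdef, Finset.mem_union, Finset.mem_filter] at hx'
      rcases hx' with h | h
      · exact hbt (h.2.symm.trans hx.2)
      · exact h.2.1 hx.2
    have huniv : Finset.univ = L ∪ (X ∪ R) := by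
      ext x
      simp only [hLdef, hXdef, hRdef, Finset.mem_union, Finset.mem_filter,
        Finset.mem_univ, true_and, iff_true]
      tauto
    rw [huniv, Finset.sum_union hdL, Finset.sum_union hdXR]
  set f : G → ℕ := fun x => Nat.card (stabilizer A x) with hf
  set S : ℕ := ∑ x : G, f x with hS
  have hsplit : S = (∑ x ∈ L, f x) + ((∑ x ∈ X, f x) + (∑ x ∈ R, f x)) := hsplitgen f
  have hsumL : ∑ x ∈ L, f x = L.card * m := by
    rw [Finset.sum_congr rfl (fun x hx => ?_), Finset.sum_const, smul_eq_mul]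
    simp only [hLdef, Finset.mem_filter] at hx
    show f x = m
    simp only [hf]
    rw [hx.2, Subgroup.card_top]
  have hsumX : ∑ x ∈ X, f x = X.card := by
    rw [Finset.sum_congr rfl (fun x hx => ?_), Finset.sum_const, smul_eq_mul, Nat.mul_one]
    simp only [hXdef, Finset.mem_filter] at hx
    show f x = 1
    simp only [hf]
    rw [hx.2, Subgroup.card_bot]
  have hsumRlo : R.card * p ≤ ∑ x ∈ R, f x := by
    rw [← smul_eq_mul]
    refine Finset.card_nsmul_le_sum R f p (fun x hx => ?_)
    simp only [hRdef, Finset.mem_filter] at hx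
    exact (hmid x hx.2.2 hx.2.1).1
  have hsumRhi : ∀ x ∈ R, f x * p ≤ m := by
    intro x hx
    simp only [hRdef, Finset.mem_filter] at hx
    exact (hmid x hx.2.2 hx.2.1).2
  have hsumRhi' : (∑ x ∈ R, f x) * p ≤ R.card * m := by
    rw [Finset.sum_mul]
    calc ∑ x ∈ R, f x * p ≤ ∑ _x ∈ R, m := Finset.sum_le_sum hsumRhi
      _ = R.card * m := by rw [Finset.sum_const, smul_eq_mul]
  -- ℕ-level bounds on S
  have hSlo : L.card * m + (X.card + R.card * p) ≤ S := by
    rw [hsplit, hsumL, hsumX]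
    exact Nat.add_le_add_left (Nat.add_le_add_left hsumRlo _) _
  have hShi : S * p ≤ L.card * m * p + (X.card * p + R.card * m) := by
    rw [hsplit, hsumX, Nat.add_mul, Nat.add_mul]
    rw [hsumL] at *
    exact Nat.add_le_add_left (Nat.add_le_add_left hsumRhi' _) _
  -- card identifications
  have hcardG : Nat.card G = L.card + (X.card + R.card) := by
    have h := hsplitgen (fun _ => 1)
    simp only [Finset.sum_const, smul_eq_mul, mul_one] at h
    rw [Nat.card_eq_fintype_card, ← Finset.card_univ]
    exact h
  have hcardL : Nat.card (absCenter G) = L.card := by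
    have e : {x : G // x ∈ absCenter G} ≃ {x : G // stabilizer A x = ⊤} :=
      Equiv.subtypeEquivRight habs
    rw [Nat.card_congr e, Nat.card_eq_fintype_card, Fintype.card_subtype, hLdef]
  have hcardX : Nat.card {x : G // stabilizer A x = ⊥} = X.card := by
    rw [Nat.card_eq_fintype_card, Fintype.card_subtype, hXdef]
  -- move to ℚ
  rw [hcount, hcardL, hcardX]
  set a : ℚ := (L.card : ℚ) with ha
  set b : ℚ := (X.card : ℚ) with hb
  set c : ℚ := (R.card : ℚ) with hc
  set n : ℚ := (Nat.card G : ℚ) with hn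
  set M : ℚ := (m : ℚ) with hM
  set P : ℚ := (p : ℚ) with hP
  have hnval : n = a + (b + c) := by rw [hn, hcardG]; push_cast; rfl
  have hMpos : (0 : ℚ) < M := by rw [hM]; exact_mod_cast hmpos
  have hPpos : (0 : ℚ) < P := by rw [hP]; exact_mod_cast hp.pos
  have hnpos : (0 : ℚ) < n := by
    rw [hn]; exact_mod_cast (Nat.card_pos : 0 < Nat.card G)
  have hQlo : a * M + (b + c * P) ≤ (S : ℚ) := by
    calc a * M + (b + c * P) = ((L.card * m + (X.card + R.card * p) : ℕ) : ℚ) := by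
          push_cast; ring
      _ ≤ (S : ℚ) := by exact_mod_cast hSlo
  have hQhi : (S : ℚ) * P ≤ a * M * P + (b * P + c * M) := by
    calc (S : ℚ) * P = ((S * p : ℕ) : ℚ) := by push_cast; ring
      _ ≤ ((L.card * m * p + (X.card * p + R.card * m) : ℕ) : ℚ) := by exact_mod_cast hShi
      _ = a * M * P + (b * P + c * M) := by push_cast; ring
  constructor
  · rw [ge_iff_le]
    have hc' : n - b - a = c := by rw [hnval]; ring
    have heq : a / n + (P * (n - b - a) + b) / (n * M)
        = (a * M + (b + c * P)) / (n * M) := by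
      rw [hc', show a / n = (a * M) / (n * M) from (mul_div_mul_right a n hMpos.ne').symm,
        ← add_div]
      congr 1
      ring
    rw [heq]
    gcongr
  · have heq : ((P - 1) * a + n) / (P * n) - b * (M - P) / (P * n * M)
        = (a * M * P + (b * P + c * M)) / (P * n * M) := by
      rw [show ((P - 1) * a + n) / (P * n) = (((P - 1) * a + n) * M) / (P * n * M) from
          (mul_div_mul_right _ _ hMpos.ne').symm,
        div_sub_div_same]
      congr 1
      rw [hnval]
      ring
    rw [heq]
    have h2 : (S : ℚ) / (n * M) = (S * P) / (P * n * M) := by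
      rw [show P * n * M = (n * M) * P by ring,
        mul_div_mul_right _ _ hPpos.ne']
    rw [h2]
    gcongr
end

section
/- Let G be a finite group with G ≠ L(G), p the smallest prime dividing |Aut(G)|, and q the smallest prime dividing |G|. Then Pr(G,Aut(G)) ≤ (p + q − 1)/(pq). In particular, if p = q then Pr(G,Aut(G)) ≤ (2p−1)/p² ≤ 3/4. -/
open MulAction

theorem stmt12 {G : Type*} [Group G] [Finite G] (hL : absCenter G ≠ ⊤)
    (p q : ℕ) (hp : p.Prime) (hpd : p ∣ Nat.card (MulAut G))
    (hpmin : ∀ r : ℕ, r.Prime → r ∣ Nat.card (MulAut G) → p ≤ r)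
    (hq : q.Prime) (hqd : q ∣ Nat.card G)
    (hqmin : ∀ r : ℕ, r.Prime → r ∣ Nat.card G → q ≤ r) :
    autPr G 1 ≤ ((p : ℚ) + (q : ℚ) - 1) / ((p : ℚ) * (q : ℚ)) ∧
    (p = q → autPr G 1 ≤ (2 * (p : ℚ) - 1) / (p : ℚ) ^ 2 ∧
      (2 * (p : ℚ) - 1) / (p : ℚ) ^ 2 ≤ 3 / 4) := by

  classical
  have fG : Fintype G := Fintype.ofFinite G
  have fA : Fintype (MulAut G) := Fintype.ofFinite _
  -- counting equivalence
  have e : {pr : G × MulAut G // pr.1⁻¹ * pr.2 pr.1 = 1} ≃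
      (Σ x : G, MulAction.stabilizer (MulAut G) x) :=
    { toFun := fun z => ⟨z.1.1, z.1.2, by
        have h := z.2
        rw [inv_mul_eq_one] at h
        rw [MulAction.mem_stabilizer_iff, MulAut.smul_def]
        exact h.symm⟩
      invFun := fun z => ⟨(z.1, z.2.1), by
        have h := z.2.2
        rw [MulAction.mem_stabilizer_iff, MulAut.smul_def] at h
        rw [h, inv_mul_cancel]⟩
      left_inv := fun z => rfl
      right_inv := fun z => rfl }
  have hN : Nat.card {pr : G × MulAut G // pr.1⁻¹ * pr.2 pr.1 = 1}
      = ∑ x : G, Nat.card (MulAction.stabilizer (MulAut G) x) := by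
    rw [Nat.card_eq_fintype_card, Fintype.card_congr e, Fintype.card_sigma]
    simp [Nat.card_eq_fintype_card]
  set N := Nat.card {pr : G × MulAut G // pr.1⁻¹ * pr.2 pr.1 = 1} with hNdef
  set cA := Nat.card (MulAut G) with hcA
  set cG := Nat.card G with hcG
  set cL := Nat.card (absCenter G) with hcL
  have hA0 : 0 < cA := Nat.card_pos
  have hG0 : 0 < cG := Nat.card_pos
  -- pointwise bound
  have hbound : ∀ x : G, p * Nat.card (MulAction.stabilizer (MulAut G) x)
      ≤ (p - 1) * (if x ∈ absCenter G then cA else 0) + cA := by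
    intro x
    by_cases hx : x ∈ absCenter G
    · rw [if_pos hx]
      have hst : MulAction.stabilizer (MulAut G) x = ⊤ := by
        ext α
        simp [MulAction.mem_stabilizer_iff, MulAut.smul_def, hx α]
      rw [hst]
      have hct : Nat.card (⊤ : Subgroup (MulAut G)) = cA := Subgroup.card_top
      rw [hct]
      have : (p - 1) * cA + cA = ((p - 1) + 1) * cA := by ring
      rw [this, Nat.sub_add_cancel hp.one_lt.le]
    · rw [if_neg hx, mul_zero, zero_add]
      set S := MulAction.stabilizer (MulAut G) x with hS
      have hSne : S ≠ ⊤ := by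
        intro h
        apply hx
        intro α
        have hα : α ∈ S := h ▸ Subgroup.mem_top α
        rw [hS, MulAction.mem_stabilizer_iff, MulAut.smul_def] at hα
        exact hα
      have hi1 : S.index ≠ 1 := fun h => hSne (Subgroup.index_eq_one.mp h)
      have hi0 : S.index ≠ 0 := by
        intro h
        have := S.card_mul_index
        rw [h, mul_zero] at this
        omega
      have hple : p ≤ S.index := by
        have hrp : (S.index).minFac.Prime := Nat.minFac_prime hi1
        have hrd : (S.index).minFac ∣ cA :=
          (Nat.minFac_dvd _).trans S.index_dvd_card
        exact le_trans (hpmin _ hrp hrd) (Nat.minFac_le (Nat.pos_of_ne_zero hi0))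
      calc p * Nat.card S ≤ S.index * Nat.card S :=
            Nat.mul_le_mul_right _ hple
        _ = cA := by rw [mul_comm]; exact S.card_mul_index
  -- sum bound
  have hfilter : (Finset.univ.filter (fun x : G => x ∈ absCenter G)).card = cL := by
    rw [hcL, Nat.card_eq_fintype_card, Fintype.card_subtype]
  have hsum : p * N ≤ (p - 1) * cL * cA + cG * cA := by
    rw [hN, Finset.mul_sum]
    refine le_trans (Finset.sum_le_sum fun x _ => hbound x) ?_
    simp only [mul_ite, mul_zero]
    rw [Finset.sum_add_distrib, Finset.sum_const, Finset.sum_ite, Finset.sum_const,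
      Finset.sum_const_zero, add_zero, Finset.card_univ, smul_eq_mul, smul_eq_mul,
      hfilter]
    have hcard : Fintype.card G = cG := (Nat.card_eq_fintype_card).symm
    rw [hcard]
    exact le_of_eq (by ring)
  -- q * cL ≤ cG
  have hLle : q * cL ≤ cG := by
    have hi1 : (absCenter G).index ≠ 1 := fun h => hL (Subgroup.index_eq_one.mp h)
    have hi0 : (absCenter G).index ≠ 0 := by
      intro h
      have := (absCenter G).card_mul_index
      rw [h, mul_zero] at this
      omega
    have hqle : q ≤ (absCenter G).index := by
      have hrp : ((absCenter G).index).minFac.Prime := Nat.minFac_prime hi1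
      have hrd : ((absCenter G).index).minFac ∣ cG :=
        (Nat.minFac_dvd _).trans (absCenter G).index_dvd_card
      exact le_trans (hqmin _ hrp hrd) (Nat.minFac_le (Nat.pos_of_ne_zero hi0))
    calc q * cL ≤ (absCenter G).index * cL := Nat.mul_le_mul_right _ hqle
      _ = cG := by rw [mul_comm]; exact (absCenter G).card_mul_index
  -- main nat inequality
  have hmain : p * q * N ≤ (p + q - 1) * (cG * cA) := by
    have h1 : q * (p * N) ≤ q * ((p - 1) * cL * cA + cG * cA) :=
      Nat.mul_le_mul_left _ hsum
    have h2 : q * ((p - 1) * cL * cA + cG * cA)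
        = (p - 1) * (q * cL) * cA + q * (cG * cA) := by ring
    have h3 : (p - 1) * (q * cL) * cA ≤ (p - 1) * cG * cA :=
      Nat.mul_le_mul_right _ (Nat.mul_le_mul_left _ hLle)
    have h4 : (p - 1) * cG * cA + q * (cG * cA) = ((p - 1) + q) * (cG * cA) := by ring
    have h5 : (p - 1) + q = p + q - 1 := by
      have := hp.one_lt
      omega
    calc p * q * N = q * (p * N) := by ring
      _ ≤ (p - 1) * (q * cL) * cA + q * (cG * cA) := by rw [← h2]; exact h1
      _ ≤ (p - 1) * cG * cA + q * (cG * cA) := by omega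
      _ = (p + q - 1) * (cG * cA) := by rw [h4, h5]
  -- rational inequality
  have hp0 : (0:ℚ) < p := by exact_mod_cast hp.pos
  have hq0 : (0:ℚ) < q := by exact_mod_cast hq.pos
  have hGA0 : (0:ℚ) < (cG : ℚ) * (cA : ℚ) := by positivity
  have hfirst : autPr G 1 ≤ ((p : ℚ) + (q : ℚ) - 1) / ((p : ℚ) * (q : ℚ)) := by
    unfold autPr
    rw [div_le_div_iff₀ hGA0 (by positivity)]
    have h1le : (1:ℕ) ≤ p + q := by have := hp.pos; omega
    have h2 : ((p * q * N : ℕ) : ℚ) ≤ (((p + q - 1) * (cG * cA) : ℕ) : ℚ) :=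
      Nat.cast_le.mpr hmain
    push_cast [Nat.cast_sub h1le] at h2
    show (N : ℚ) * ((p:ℚ) * q) ≤ _
    push_cast
    linarith
  refine ⟨hfirst, fun hpq => ?_⟩
  subst hpq
  constructor
  · have : ((p : ℚ) + (p : ℚ) - 1) / ((p : ℚ) * (p : ℚ))
        = (2 * (p : ℚ) - 1) / (p : ℚ) ^ 2 := by ring_nf
    rw [← this]
    exact hfirst
  · rw [div_le_div_iff₀ (by positivity) (by norm_num)]
    have hp2 : (2:ℚ) ≤ (p:ℚ) := by exact_mod_cast hp.two_le
    nlinarith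
end

section
/- Let G be a finite non-abelian group, p the smallest prime dividing |Aut(G)|, and q the smallest prime dividing |G|. Then Pr(G,Aut(G)) ≤ (q² + p − 1)/(pq²). In particular, if p = q then Pr(G,Aut(G)) ≤ (p² + p − 1)/p³ ≤ 5/8. -/
open MulAction

/-- A number `n ≠ 0,1` which is not prime and all of whose prime factors are `≥ q`
is at least `q²`. -/
lemma aux_sq_le {n q : ℕ} (h0 : n ≠ 0) (h1 : n ≠ 1) (hnp : ¬n.Prime)
    (hmin : ∀ r : ℕ, r.Prime → r ∣ n → q ≤ r) : q ^ 2 ≤ n := by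
  have hr := Nat.minFac_prime h1
  have hrd := Nat.minFac_dvd n
  set m := n / n.minFac with hm
  have hnm : n = n.minFac * m := (Nat.mul_div_cancel' hrd).symm
  have hm0 : m ≠ 0 := by
    intro h; rw [h, mul_zero] at hnm; exact h0 hnm
  have hm1 : m ≠ 1 := by
    intro h; rw [h, mul_one] at hnm; exact hnp (hnm ▸ hr)
  have hs := Nat.minFac_prime hm1
  have hq1 : q ≤ n.minFac := hmin _ hr hrd
  have hq2 : q ≤ m := le_trans (hmin _ hs ((Nat.minFac_dvd m).trans (Nat.div_dvd_of_dvd hrd)))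
    (Nat.minFac_le (Nat.pos_of_ne_zero hm0))
  calc q ^ 2 = q * q := sq q
    _ ≤ n.minFac * m := Nat.mul_le_mul hq1 hq2
    _ = n := hnm.symm

theorem stmt13 {G : Type*} [Group G] [Finite G] (hna : ∃ a b : G, a * b ≠ b * a)
    (p q : ℕ) (hp : p.Prime) (hpd : p ∣ Nat.card (MulAut G))
    (hpmin : ∀ r : ℕ, r.Prime → r ∣ Nat.card (MulAut G) → p ≤ r)
    (hq : q.Prime) (hqd : q ∣ Nat.card G)
    (hqmin : ∀ r : ℕ, r.Prime → r ∣ Nat.card G → q ≤ r) :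
    autPr G 1 ≤ ((q : ℚ) ^ 2 + (p : ℚ) - 1) / ((p : ℚ) * (q : ℚ) ^ 2) ∧
    (p = q → autPr G 1 ≤ ((p : ℚ) ^ 2 + (p : ℚ) - 1) / (p : ℚ) ^ 3 ∧
      ((p : ℚ) ^ 2 + (p : ℚ) - 1) / (p : ℚ) ^ 3 ≤ 5 / 8) := by
  classical
  letI : Fintype G := Fintype.ofFinite G
  letI : Fintype (MulAut G) := Fintype.ofFinite _
  set L := absCenter G with hL
  set nG := Nat.card G with hnG
  set nA := Nat.card (MulAut G) with hnA
  set nL := Nat.card L with hnL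
  -- L is contained in the center
  have hLc : L ≤ Subgroup.center G := by
    intro x hx
    rw [Subgroup.mem_center_iff]
    intro g
    have h := hx (MulAut.conj g)
    rw [MulAut.conj_apply] at h
    have := congrArg (· * g) h
    simpa [mul_assoc] using this
  -- L ≠ ⊤
  obtain ⟨a, b, hab⟩ := hna
  have hLne : L.index ≠ 1 := by
    intro h
    rw [Subgroup.index_eq_one] at h
    have hb : b ∈ L := h ▸ Subgroup.mem_top b
    have := hb (MulAut.conj a)
    rw [MulAut.conj_apply] at this
    apply hab
    have := congrArg (· * a) this
    simpa [mul_assoc] using this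
  have hLi0 : L.index ≠ 0 := L.index_ne_zero_of_finite
  -- L.index is not prime
  have hLnp : ¬L.index.Prime := by
    intro hr
    haveI : Fact (L.index.Prime) := ⟨hr⟩
    haveI : IsCyclic (G ⧸ L) := isCyclic_of_prime_card (p := L.index) rfl
    have hcomm := commutative_of_cyclic_center_quotient (QuotientGroup.mk' L)
      (by rw [QuotientGroup.ker_mk']; exact hLc) a b
    exact hab hcomm
  -- q² ≤ L.index and hence q² * nL ≤ nG
  have hqsq : q ^ 2 ≤ L.index :=
    aux_sq_le hLi0 hLne hLnp (fun r hr hrd => hqmin r hr (hrd.trans L.index_dvd_card))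
  have hnLnG : q ^ 2 * nL ≤ nG := by
    calc q ^ 2 * nL ≤ L.index * nL := Nat.mul_le_mul_right _ hqsq
      _ = nG := by rw [mul_comm]; exact L.card_mul_index
  -- counting: card S = ∑ x, card of stabilizer of x
  set f : G → ℕ := fun x => Nat.card {α : MulAut G // α x = x} with hf
  have hcount : Nat.card {pr : G × MulAut G // pr.1⁻¹ * pr.2 pr.1 = 1} = ∑ x : G, f x := by
    have e1 : {pr : G × MulAut G // pr.1⁻¹ * pr.2 pr.1 = 1} ≃
        Σ x : G, {α : MulAut G // α x = x} :=
      (Equiv.subtypeEquivRight (fun pr => by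
        rw [inv_mul_eq_one]; exact eq_comm)).trans
        (Equiv.subtypeProdEquivSigmaSubtype fun (x : G) (α : MulAut G) => α x = x)
    rw [Nat.card_congr e1, Nat.card_eq_fintype_card, Fintype.card_sigma]
    exact Finset.sum_congr rfl fun x _ => (Nat.card_eq_fintype_card).symm
  -- bounds on f
  have hfin : ∀ x : G, x ∈ L → f x = nA := fun x hx =>
    Nat.card_congr (Equiv.subtypeUnivEquiv hx)
  have hfout : ∀ x : G, x ∉ L → p * f x ≤ nA := by
    intro x hx
    set H : Subgroup (MulAut G) := MulAction.stabilizer (MulAut G) x with hH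
    have hcard : f x = Nat.card H :=
      Nat.card_congr (Equiv.subtypeEquivRight fun α => by
        simp [hH, MulAction.mem_stabilizer_iff, MulAut.smul_def])
    have hne1 : H.index ≠ 1 := by
      intro h
      rw [Subgroup.index_eq_one] at h
      apply hx
      intro α
      have : α ∈ H := h ▸ Subgroup.mem_top α
      simpa [hH, MulAction.mem_stabilizer_iff, MulAut.smul_def] using this
    have hne0 : H.index ≠ 0 := H.index_ne_zero_of_finite
    have hple : p ≤ H.index :=
      le_trans (hpmin _ (Nat.minFac_prime hne1) ((Nat.minFac_dvd _).trans H.index_dvd_card))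
        (Nat.minFac_le (Nat.pos_of_ne_zero hne0))
    calc p * f x = p * Nat.card H := by rw [hcard]
      _ ≤ H.index * Nat.card H := Nat.mul_le_mul_right _ hple
      _ = nA := by rw [mul_comm]; exact H.card_mul_index
  -- the main counting inequality
  have hp1 : 1 ≤ p := hp.one_lt.le.trans' (by norm_num)
  have hstep : p * ∑ x : G, f x ≤ nG * nA + nL * ((p - 1) * nA) := by
    rw [Finset.mul_sum]
    calc ∑ x : G, p * f x ≤ ∑ x : G, (nA + if x ∈ L then (p - 1) * nA else 0) := by
          apply Finset.sum_le_sum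
          intro x _
          by_cases hx : x ∈ L
          · rw [if_pos hx, hfin x hx, Nat.sub_mul, one_mul,
              Nat.add_sub_cancel' (Nat.le_mul_of_pos_left nA (Nat.pos_of_ne_zero (by omega)))]
          · rw [if_neg hx, add_zero]
            exact hfout x hx
      _ = nG * nA + nL * ((p - 1) * nA) := by
          rw [Finset.sum_add_distrib, Finset.sum_const, ← Finset.sum_filter,
            Finset.sum_const, smul_eq_mul, smul_eq_mul]
          congr 1
          · rw [hnG, Nat.card_eq_fintype_card, Finset.card_univ]
          · rw [hnL, Nat.card_eq_fintype_card, Fintype.card_subtype]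
  -- combine: p * q² * S ≤ nA * nG * (q² + p − 1)
  set S := Nat.card {pr : G × MulAut G // pr.1⁻¹ * pr.2 pr.1 = 1} with hS
  have hmain : p * q ^ 2 * S ≤ nG * nA * (q ^ 2 + p - 1) := by
    have h1 : q ^ 2 * (p * S) ≤ q ^ 2 * (nG * nA) + (q ^ 2 * nL) * ((p - 1) * nA) := by
      rw [hcount]
      calc q ^ 2 * (p * ∑ x : G, f x) ≤ q ^ 2 * (nG * nA + nL * ((p - 1) * nA)) :=
            Nat.mul_le_mul_left _ hstep
        _ = q ^ 2 * (nG * nA) + (q ^ 2 * nL) * ((p - 1) * nA) := by ring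
    have h2 : (q ^ 2 * nL) * ((p - 1) * nA) ≤ nG * ((p - 1) * nA) :=
      Nat.mul_le_mul_right _ hnLnG
    calc p * q ^ 2 * S = q ^ 2 * (p * S) := by ring
      _ ≤ q ^ 2 * (nG * nA) + nG * ((p - 1) * nA) := le_trans h1 (Nat.add_le_add_left h2 _)
      _ = nG * nA * (q ^ 2 + (p - 1)) := by ring
      _ = nG * nA * (q ^ 2 + p - 1) := by
          have : q ^ 2 + (p - 1) = q ^ 2 + p - 1 := by omega
          rw [this]
  -- positivity facts
  have hG0 : 0 < nG := Nat.card_pos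
  have hA0 : 0 < nA := Nat.card_pos
  have hp0 : (0 : ℚ) < p := by exact_mod_cast hp.pos
  have hq0 : (0 : ℚ) < q := by exact_mod_cast hq.pos
  have hp2 : (2 : ℚ) ≤ p := by exact_mod_cast hp.two_le
  -- cast the main inequality
  have hcast : (p : ℚ) * (q : ℚ) ^ 2 * (S : ℚ) ≤
      (nG : ℚ) * (nA : ℚ) * ((q : ℚ) ^ 2 + (p : ℚ) - 1) := by
    have := (Nat.cast_le (α := ℚ)).mpr hmain
    push_cast [Nat.sub_one] at this ⊢
    have h1 : (1 : ℕ) ≤ q ^ 2 + p := le_trans hp1 (Nat.le_add_left p (q ^ 2))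
    calc (p : ℚ) * (q : ℚ) ^ 2 * (S : ℚ) ≤ ((nG * nA * (q ^ 2 + p - 1) : ℕ) : ℚ) := by
          exact_mod_cast hmain
      _ = (nG : ℚ) * (nA : ℚ) * ((q : ℚ) ^ 2 + (p : ℚ) - 1) := by
          push_cast [Nat.cast_sub h1]
          ring
  have hbound : autPr G 1 ≤ ((q : ℚ) ^ 2 + (p : ℚ) - 1) / ((p : ℚ) * (q : ℚ) ^ 2) := by
    rw [autPr, ← hnG, ← hnA, ← hS]
    rw [div_le_div_iff₀ (by positivity) (by positivity)]
    nlinarith [hcast]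
  refine ⟨hbound, fun hpq => ?_⟩
  subst hpq
  constructor
  · have : (p : ℚ) ^ 3 = (p : ℚ) * (p : ℚ) ^ 2 := by ring
    rw [this]
    exact hbound
  · rw [div_le_div_iff₀ (by positivity) (by norm_num)]
    nlinarith [mul_nonneg (sub_nonneg.2 hp2) (show (0:ℚ) ≤ 5*(p:ℚ)^2+2*(p:ℚ)-4 by nlinarith)]
end

section
/- Let G be a finite group and S(G,Aut(G)) = {x⁻¹·α(x) : x ∈ G, α ∈ Aut(G)}. Then Pr(G,Aut(G)) ≥ (1/|S(G,Aut(G))|)·(1 + (|S(G,Aut(G))| − 1)/|G : L(G)|), with equality if and only if orb(x) = x·S(G,Aut(G)) for all x ∈ G \ L(G). -/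
open MulAction

private lemma qaux (a b c : ℚ) (ha : a ≠ 0) (hb : b ≠ 0) (hc : c ≠ 0) :
    1/a * (1 + (a-1)/b) = (c + (c*b - c)*a⁻¹)/(c*b) := by
  field_simp
  ring

private lemma nat_card_sigma {ι : Type*} [Fintype ι] (f : ι → Type*) [∀ i, Finite (f i)] :
    Nat.card ((i : ι) × f i) = ∑ i, Nat.card (f i) := by
  have := fun i => Fintype.ofFinite (f i)
  simp [Nat.card_eq_fintype_card, Fintype.card_sigma]

theorem stmt14 {G : Type*} [Group G] [Finite G] :
    autPr G 1 ≥ (1 / (Nat.card {g : G | ∃ (x : G) (α : MulAut G), x⁻¹ * α x = g} : ℚ)) *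
      (1 + ((Nat.card {g : G | ∃ (x : G) (α : MulAut G), x⁻¹ * α x = g} : ℚ) - 1) /
        ((absCenter G).index : ℚ)) ∧
    (autPr G 1 = (1 / (Nat.card {g : G | ∃ (x : G) (α : MulAut G), x⁻¹ * α x = g} : ℚ)) *
      (1 + ((Nat.card {g : G | ∃ (x : G) (α : MulAut G), x⁻¹ * α x = g} : ℚ) - 1) /
        ((absCenter G).index : ℚ)) ↔
      ∀ x : G, x ∉ absCenter G →
        orbit (MulAut G) x =  (x * ·) '' {g : G | ∃ (y : G) (α : MulAut G), y⁻¹ * α y = g}) := by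
  classical
  have _instG := Fintype.ofFinite G
  set S : Set G := {g : G | ∃ (x : G) (α : MulAut G), x⁻¹ * α x = g} with hSdef
  have h1S : (1:G) ∈ S := ⟨1, 1, by simp⟩
  have hSne : Nonempty S := ⟨⟨1, h1S⟩⟩
  have hs_pos : 0 < Nat.card S := Nat.card_pos
  have hn_pos : 0 < Nat.card G := Nat.card_pos
  have hA_pos : 0 < Nat.card (MulAut G) := Nat.card_pos
  have hk_pos : 0 < (absCenter G).index :=
    Nat.pos_of_ne_zero (Subgroup.index_ne_zero_of_finite)
  have hl_pos : 0 < Nat.card (absCenter G) := Nat.card_pos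
  have hlk : (Nat.card (absCenter G)) * (absCenter G).index = Nat.card G :=
    Subgroup.card_mul_index _
  -- orbit facts
  have horb_pos : ∀ x : G, 0 < Nat.card (orbit (MulAut G) x) := by
    intro x
    have : Nonempty (orbit (MulAut G) x) := ⟨⟨x, mem_orbit_self x⟩⟩
    exact Nat.card_pos
  have horb_sub : ∀ x : G, orbit (MulAut G) x ⊆ (x * ·) '' S := by
    rintro x y ⟨α, rfl⟩
    exact ⟨x⁻¹ * α x, ⟨x, α, rfl⟩, by simp [MulAut.smul_def]⟩
  have hcard_xS : ∀ x : G, Nat.card ((x * ·) '' S : Set G) = Nat.card S := by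
    intro x
    rw [Nat.card_coe_set_eq, Nat.card_coe_set_eq,
      Set.ncard_image_of_injective _ (mul_right_injective x)]
  have horb_le : ∀ x : G, Nat.card (orbit (MulAut G) x) ≤ Nat.card S := by
    intro x
    rw [← hcard_xS x, Nat.card_coe_set_eq, Nat.card_coe_set_eq]
    exact Set.ncard_le_ncard (horb_sub x) (Set.toFinite _)
  have horbL : ∀ x : G, x ∈ absCenter G → orbit (MulAut G) x = {x} := by
    intro x hx
    ext y
    constructor
    · rintro ⟨α, rfl⟩; simpa [MulAut.smul_def] using hx α
    · rintro rfl; exact mem_orbit_self _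
  -- the main formula for autPr
  have hPr : autPr G 1
      = (∑ x : G, ((Nat.card (orbit (MulAut G) x) : ℚ))⁻¹) / (Nat.card G : ℚ) := by
    have e1 : {p : G × MulAut G // p.1⁻¹ * p.2 p.1 = 1}
        ≃ Σ x : G, {α : MulAut G // α x = x} :=
      (Equiv.subtypeProdEquivSigmaSubtype fun (x : G) (α : MulAut G) => x⁻¹ * α x = 1).trans
        (Equiv.sigmaCongrRight fun x => Equiv.subtypeEquivRight fun α => by
          rw [inv_mul_eq_one, eq_comm])
    have hcount : Nat.card {p : G × MulAut G // p.1⁻¹ * p.2 p.1 = 1}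
        = ∑ x : G, Nat.card (stabilizer (MulAut G) x) := by
      rw [Nat.card_congr e1, nat_card_sigma]
      refine Finset.sum_congr rfl fun x _ => Nat.card_congr (Equiv.subtypeEquivRight fun α => ?_)
      simp [MulAction.mem_stabilizer_iff, MulAut.smul_def]
    have hos : ∀ x : G, (Nat.card (stabilizer (MulAut G) x) : ℚ)
        = (Nat.card (MulAut G) : ℚ) * ((Nat.card (orbit (MulAut G) x) : ℚ))⁻¹ := by
      intro x
      have h1 := Fintype.ofFinite (MulAut G)
      have h2 := Fintype.ofFinite (orbit (MulAut G) x)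
      have h3 := Fintype.ofFinite (stabilizer (MulAut G) x)
      have h := MulAction.card_orbit_mul_card_stabilizer_eq_card_group (MulAut G) x
      have h' : Nat.card (orbit (MulAut G) x) * Nat.card (stabilizer (MulAut G) x)
          = Nat.card (MulAut G) := by
        simpa [Nat.card_eq_fintype_card] using h
      have horb : ((Nat.card (orbit (MulAut G) x) : ℚ)) ≠ 0 := by
        exact_mod_cast (horb_pos x).ne'
      have h'' : Nat.card (stabilizer (MulAut G) x) * Nat.card (orbit (MulAut G) x)
          = Nat.card (MulAut G) := by rw [mul_comm]; exact h'
      rw [eq_mul_inv_iff_mul_eq₀ horb]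
      exact_mod_cast h''
    have hA_ne : ((Nat.card (MulAut G) : ℚ)) ≠ 0 := by exact_mod_cast hA_pos.ne'
    rw [autPr, hcount]
    push_cast
    rw [Finset.sum_congr rfl fun x _ => hos x, ← Finset.mul_sum, mul_comm ((Nat.card G : ℚ)) _,
      mul_div_mul_left _ _ hA_ne]
  -- comparison function
  set L : Subgroup G := absCenter G with hL
  set f : G → ℚ := fun x => if x ∈ L then (1:ℚ) else ((Nat.card S : ℚ))⁻¹ with hf
  have hpt : ∀ x : G, f x ≤ ((Nat.card (orbit (MulAut G) x) : ℚ))⁻¹ := by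
    intro x
    simp only [hf]
    split_ifs with hx
    · rw [horbL x hx]
      norm_num [Nat.card_coe_set_eq, Set.ncard_singleton]
    · apply inv_anti₀
      · exact_mod_cast horb_pos x
      · exact_mod_cast horb_le x
  have hsum_f : ∑ x : G, f x
      = (Nat.card L : ℚ) + ((Nat.card G : ℚ) - (Nat.card L : ℚ)) * ((Nat.card S : ℚ))⁻¹ := by
    simp only [hf]
    rw [Finset.sum_ite, Finset.sum_const, Finset.sum_const]
    have hcl : (Finset.univ.filter (· ∈ L)).card = Nat.card L := by
      rw [Nat.card_eq_fintype_card, Fintype.card_subtype]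
    have hcnl : (Finset.univ.filter (¬ · ∈ L)).card = Nat.card G - Nat.card L := by
      have h1 := Finset.card_filter_add_card_filter_not (s := (Finset.univ : Finset G))
        (p := (· ∈ L))
      have hcu : (Finset.univ : Finset G).card = Nat.card G := by
        rw [Finset.card_univ, Nat.card_eq_fintype_card]
      omega
    have hle : Nat.card L ≤ Nat.card G := by
      calc Nat.card L ≤ Nat.card L * L.index := Nat.le_mul_of_pos_right _ hk_pos
      _ = Nat.card G := hlk
    rw [hcl, hcnl, nsmul_eq_mul, nsmul_eq_mul, mul_one, Nat.cast_sub hle]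
  -- numeric facts
  have hn_ne : ((Nat.card G : ℚ)) ≠ 0 := by exact_mod_cast hn_pos.ne'
  have hnQ : (0:ℚ) < (Nat.card G : ℚ) := by exact_mod_cast hn_pos
  have hs_ne : ((Nat.card S : ℚ)) ≠ 0 := by exact_mod_cast hs_pos.ne'
  have hk_ne : ((L.index : ℚ)) ≠ 0 := by exact_mod_cast hk_pos.ne'
  have hl_ne : ((Nat.card L : ℚ)) ≠ 0 := by exact_mod_cast hl_pos.ne'
  have hlkQ : (Nat.card L : ℚ) * (L.index : ℚ) = (Nat.card G : ℚ) := by exact_mod_cast hlk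
  have hR : 1 / (Nat.card S : ℚ) * (1 + ((Nat.card S : ℚ) - 1) / (L.index : ℚ))
      = (∑ x : G, f x) / (Nat.card G : ℚ) := by
    rw [hsum_f, ← hlkQ]
    exact qaux _ _ _ hs_ne hk_ne hl_ne
  constructor
  · rw [ge_iff_le, hPr, hR]
    gcongr with i
    exact hpt i
  · rw [hPr, hR, div_eq_div_iff hn_ne hn_ne, mul_left_inj' hn_ne, eq_comm,
      Finset.sum_eq_sum_iff_of_le fun i _ => hpt i]
    constructor
    · intro h x hx
      have hx' := h x (Finset.mem_univ x)
      simp only [hf, if_neg hx] at hx'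
      have hcard : Nat.card (orbit (MulAut G) x) = Nat.card S := by
        exact_mod_cast (inv_inj.mp hx').symm
      refine Set.eq_of_subset_of_ncard_le (horb_sub x) (le_of_eq ?_) (Set.toFinite _)
      rw [← Nat.card_coe_set_eq, ← Nat.card_coe_set_eq, hcard_xS x, hcard]
    · intro h x _
      by_cases hx : x ∈ L
      · simp only [hf, if_pos hx, horbL x hx]
        norm_num [Nat.card_coe_set_eq, Set.ncard_singleton]
      · simp only [hf, if_neg hx, h x hx, hcard_xS x]
end

section
/- Let G be a finite group and K(G) the subgroup generated by all autocommutators x⁻¹·α(x). Then Pr(G,Aut(G)) ≥ (1/|K(G)|)·(1 + (|K(G)| − 1)/|G : L(G)|). -/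
open MulAction

theorem stmt16 {G : Type*} [Group G] [Finite G] :
    autPr G 1 ≥
      (1 / (Nat.card (Subgroup.closure {g : G | ∃ (x : G) (α : MulAut G), x⁻¹ * α x = g}) : ℚ)) *
      (1 + ((Nat.card (Subgroup.closure {g : G | ∃ (x : G) (α : MulAut G), x⁻¹ * α x = g}) : ℚ) - 1) /
        ((absCenter G).index : ℚ)) := by
  classical
  have _inst : Fintype G := Fintype.ofFinite G
  set Kset : Set G := {g : G | ∃ (x : G) (α : MulAut G), x⁻¹ * α x = g} with hKset
  set K := Subgroup.closure Kset with hK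
  set L := absCenter G with hLdef
  -- counting the fixed pairs as a sum of stabilizer cardinalities
  have e : {p : G × MulAut G // p.1⁻¹ * p.2 p.1 = 1} ≃
      (Σ x : G, stabilizer (MulAut G) x) :=
  { toFun := fun p => ⟨p.1.1, ⟨p.1.2, by
      rw [mem_stabilizer_iff, MulAut.smul_def]
      have h := p.2
      rw [inv_mul_eq_one] at h
      exact h.symm⟩⟩
    invFun := fun s => ⟨(s.1, s.2.1), by
      have h := s.2.2
      rw [mem_stabilizer_iff, MulAut.smul_def] at h
      simp [h]⟩
    left_inv := fun p => rfl
    right_inv := fun s => rfl }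
  have hsum : (Nat.card {p : G × MulAut G // p.1⁻¹ * p.2 p.1 = 1} : ℚ) =
      ∑ x : G, (Nat.card (stabilizer (MulAut G) x) : ℚ) := by
    rw [Nat.card_congr e]
    haveI : ∀ x : G, Fintype (stabilizer (MulAut G) x) := fun x => Fintype.ofFinite _
    rw [Nat.card_eq_fintype_card, Fintype.card_sigma]
    push_cast
    exact Finset.sum_congr rfl fun x _ => by rw [Nat.card_eq_fintype_card]
  -- orbit–stabilizer
  have horb : ∀ x : G,
      Nat.card (orbit (MulAut G) x) * Nat.card (stabilizer (MulAut G) x)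
        = Nat.card (MulAut G) := fun x => by
    rw [← Nat.card_prod]
    exact Nat.card_congr (orbitProdStabilizerEquivGroup (MulAut G) x)
  -- orbits are contained in cosets of K
  have horbK : ∀ x : G, Nat.card (orbit (MulAut G) x) ≤ Nat.card K := by
    intro x
    have hinj : Function.Injective
        (fun y : orbit (MulAut G) x => (⟨x⁻¹ * (y : G), by
          obtain ⟨α, hα⟩ := y.2
          rw [← hα]
          exact Subgroup.subset_closure ⟨x, α, rfl⟩⟩ : K)) := by
      intro a b hab
      have := congrArg (fun z : K => (z : G)) hab
      simp only [mul_right_inj] at this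
      exact Subtype.ext this
    exact Nat.card_le_card_of_injective _ hinj
  -- key pointwise bound
  have hA : 0 < (Nat.card (MulAut G) : ℚ) := by
    exact_mod_cast Nat.card_pos
  have hKpos : 0 < (Nat.card K : ℚ) := by exact_mod_cast Nat.card_pos
  have hstab : ∀ x : G, (Nat.card (MulAut G) : ℚ) / (Nat.card K : ℚ) ≤
      (Nat.card (stabilizer (MulAut G) x) : ℚ) := by
    intro x
    rw [div_le_iff₀ hKpos]
    calc (Nat.card (MulAut G) : ℚ)
        = (Nat.card (orbit (MulAut G) x) : ℚ) * Nat.card (stabilizer (MulAut G) x) := by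
          exact_mod_cast (horb x).symm
      _ ≤ (Nat.card K : ℚ) * Nat.card (stabilizer (MulAut G) x) := by
          have := horbK x
          have h0 : (0:ℚ) ≤ (Nat.card (stabilizer (MulAut G) x) : ℚ) := by positivity
          exact mul_le_mul_of_nonneg_right (by exact_mod_cast this) h0
      _ = (Nat.card (stabilizer (MulAut G) x) : ℚ) * Nat.card K := mul_comm _ _
  -- for x in L, the stabilizer is everything
  have hstabL : ∀ x : G, x ∈ L → Nat.card (stabilizer (MulAut G) x) = Nat.card (MulAut G) := by
    intro x hx
    have : stabilizer (MulAut G) x = ⊤ := by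
      ext α
      simp only [mem_stabilizer_iff, MulAut.smul_def, Subgroup.mem_top, iff_true]
      exact hx α
    rw [this]
    exact Nat.card_congr Subgroup.topEquiv.toEquiv
  -- split the sum
  set l : ℚ := (Nat.card L : ℚ) with hl
  set g : ℚ := (Nat.card G : ℚ) with hg
  set k : ℚ := (Nat.card K : ℚ) with hk2
  set a : ℚ := (Nat.card (MulAut G) : ℚ) with ha2
  have hcardL : (Finset.univ.filter (fun x : G => x ∈ L)).card = Nat.card L := by
    rw [Nat.card_eq_fintype_card, Fintype.card_subtype]
  have hsumge : l * a + (g - l) * (a / k) ≤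
      ∑ x : G, (Nat.card (stabilizer (MulAut G) x) : ℚ) := by
    rw [← Finset.sum_filter_add_sum_filter_not Finset.univ (fun x : G => x ∈ L)]
    have h1 : l * a ≤ ∑ x ∈ Finset.univ.filter (fun x : G => x ∈ L),
        (Nat.card (stabilizer (MulAut G) x) : ℚ) := by
      rw [hl, ← hcardL]
      calc ((Finset.univ.filter (fun x : G => x ∈ L)).card : ℚ) * a
          = ∑ _x ∈ Finset.univ.filter (fun x : G => x ∈ L), a := by
            rw [Finset.sum_const, nsmul_eq_mul]
        _ ≤ _ := Finset.sum_le_sum fun x hx => by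
            rw [Finset.mem_filter] at hx
            rw [hstabL x hx.2]
    have h2 : (g - l) * (a / k) ≤ ∑ x ∈ Finset.univ.filter (fun x : G => ¬ x ∈ L),
        (Nat.card (stabilizer (MulAut G) x) : ℚ) := by
      have hcard2 : (Finset.univ.filter (fun x : G => ¬ x ∈ L)).card = Fintype.card G -
          (Finset.univ.filter (fun x : G => x ∈ L)).card := by
        rw [Finset.filter_not, Finset.card_sdiff_of_subset (Finset.filter_subset _ _), Finset.card_univ]
      have hle : (Finset.univ.filter (fun x : G => x ∈ L)).card ≤ Fintype.card G :=
        le_trans (Finset.card_filter_le _ _) (le_of_eq Finset.card_univ)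
      have hgl : g - l = ((Finset.univ.filter (fun x : G => ¬ x ∈ L)).card : ℚ) := by
        rw [hcard2, Nat.cast_sub hle, hcardL, hg, hl, Nat.card_eq_fintype_card]
      rw [hgl]
      calc ((Finset.univ.filter (fun x : G => ¬ x ∈ L)).card : ℚ) * (a / k)
          = ∑ _x ∈ Finset.univ.filter (fun x : G => ¬ x ∈ L), (a / k) := by
            rw [Finset.sum_const, nsmul_eq_mul]
        _ ≤ _ := Finset.sum_le_sum fun x _ => hstab x
    exact add_le_add h1 h2
  -- put it together
  have hgpos : 0 < g := by rw [hg]; exact_mod_cast Nat.card_pos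
  have hlpos : 0 < l := by rw [hl]; exact_mod_cast Nat.card_pos
  have hindex : (L.index : ℚ) * l = g := by
    rw [hl, hg]
    exact_mod_cast Subgroup.index_mul_card L
  have hipos : 0 < (L.index : ℚ) := by
    have : L.index ≠ 0 := Subgroup.index_ne_zero_of_finite
    exact_mod_cast Nat.pos_of_ne_zero this
  rw [ge_iff_le, autPr, le_div_iff₀ (by positivity)]
  calc 1 / k * (1 + (k - 1) / (L.index : ℚ)) * (g * a)
      = l * a + (g - l) * (a / k) := by
        have hgil : g = (L.index : ℚ) * l := hindex.symm
        field_simp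
        rw [hgil]; ring
    _ ≤ ∑ x : G, (Nat.card (stabilizer (MulAut G) x) : ℚ) := hsumge
    _ = _ := hsum.symm
end

section
/- Let G be a finite group with G ≠ L(G), p the smallest prime dividing |Aut(G)|, and q the smallest prime dividing |G|. If Pr(G,Aut(G)) = (p+q−1)/(pq), then G/L(G) is cyclic of order q. -/
open MulAction

theorem stmt17 {G : Type*} [Group G] [Finite G] (hL : absCenter G ≠ ⊤)
    (p q : ℕ) (hp : p.Prime) (hpd : p ∣ Nat.card (MulAut G))
    (hpmin : ∀ r : ℕ, r.Prime → r ∣ Nat.card (MulAut G) → p ≤ r)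
    (hq : q.Prime) (hqd : q ∣ Nat.card G)
    (hqmin : ∀ r : ℕ, r.Prime → r ∣ Nat.card G → q ≤ r)
    (hPr : autPr G 1 = ((p : ℚ) + (q : ℚ) - 1) / ((p : ℚ) * (q : ℚ))) :
    IsCyclic (G ⧸ absCenter G) ∧ Nat.card (G ⧸ absCenter G) = q := by
  classical
  haveI : Fintype G := Fintype.ofFinite G
  haveI : Fintype (MulAut G) := Fintype.ofFinite _
  set A := Nat.card (MulAut G) with hA
  set g := Nat.card G with hg
  set l := Nat.card (absCenter G) with hl
  set n := (absCenter G).index with hn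
  set N := Nat.card {x : G × MulAut G // x.1⁻¹ * x.2 x.1 = 1} with hN
  have hg0 : 0 < g := Nat.card_pos
  have hA0 : 0 < A := Nat.card_pos
  have hl0 : 0 < l := Nat.card_pos
  have hln : l * n = g := Subgroup.card_mul_index _
  have hp2 : 2 ≤ p := hp.two_le
  have hq2 : 2 ≤ q := hq.two_le
  -- N as a sum of stabilizer cards
  have hNsum : N = ∑ x : G, Nat.card (stabilizer (MulAut G) x) := by
    have e1 : {x : G × MulAut G // x.1⁻¹ * x.2 x.1 = 1} ≃
        Σ x : G, {α : MulAut G // α • x = x} := by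
      refine (Equiv.subtypeEquiv (Equiv.refl _) ?_).trans
        (Equiv.subtypeProdEquivSigmaSubtype (fun x (α : MulAut G) => α • x = x))
      intro a
      simp only [Equiv.refl_apply]
      constructor
      · intro h; exact (inv_mul_eq_one.mp h).symm
      · intro h; rw [show a.2 a.1 = a.2 • a.1 from rfl, h, inv_mul_cancel]
    rw [hN, Nat.card_congr e1]
    simp only [Nat.card_eq_fintype_card, Fintype.card_sigma]
    rfl
  -- stabilizer card bounds
  have hstab_top : ∀ x : G, x ∈ absCenter G →
      Nat.card (stabilizer (MulAut G) x) = A := by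
    intro x hx
    have : stabilizer (MulAut G) x = ⊤ := by
      ext α; simp only [Subgroup.mem_top, iff_true, mem_stabilizer_iff]
      exact hx α
    rw [this, hA]
    exact Nat.card_congr Subgroup.topEquiv.toEquiv
  have hstab_small : ∀ x : G, x ∉ absCenter G →
      p * Nat.card (stabilizer (MulAut G) x) ≤ A := by
    intro x hx
    set H := stabilizer (MulAut G) x with hH
    have hne : H ≠ ⊤ := by
      intro h
      apply hx
      intro α
      have : α ∈ H := h ▸ Subgroup.mem_top α
      exact this
    have hidx1 : H.index ≠ 1 := fun h => hne (Subgroup.index_eq_one.mp h)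
    have hidx0 : H.index ≠ 0 := Subgroup.index_ne_zero_of_finite
    have hr := (H.index).minFac_prime hidx1
    have hrd : (H.index).minFac ∣ A := (Nat.minFac_dvd _).trans (Subgroup.index_dvd_card H)
    have hpidx : p ≤ H.index :=
      le_trans (hpmin _ hr hrd) (Nat.minFac_le (Nat.pos_of_ne_zero hidx0))
    calc p * Nat.card H ≤ H.index * Nat.card H := Nat.mul_le_mul_right _ hpidx
      _ = A := by rw [mul_comm]; exact Subgroup.card_mul_index H
  -- bound p * N
  have hcardL : (Finset.univ.filter (fun x : G => x ∈ absCenter G)).card = l := by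
    rw [hl, Nat.card_eq_fintype_card, Fintype.card_subtype]
  have hbound : p * N ≤ l * (p * A) + (g - l) * A := by
    rw [hNsum, Finset.mul_sum]
    rw [← Finset.sum_filter_add_sum_filter_not Finset.univ (fun x : G => x ∈ absCenter G)]
    refine Nat.add_le_add (le_of_eq ?_) ?_
    · calc ∑ x ∈ Finset.univ.filter (fun x : G => x ∈ absCenter G),
            p * Nat.card (stabilizer (MulAut G) x)
          = ∑ x ∈ Finset.univ.filter (fun x : G => x ∈ absCenter G), p * A := by
            apply Finset.sum_congr rfl
            intro x hx
            rw [hstab_top x (Finset.mem_filter.mp hx).2]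
        _ = l * (p * A) := by rw [Finset.sum_const, smul_eq_mul, hcardL]
    · calc ∑ x ∈ Finset.univ.filter (fun x : G => ¬ x ∈ absCenter G),
            p * Nat.card (stabilizer (MulAut G) x)
          ≤ ∑ x ∈ Finset.univ.filter (fun x : G => ¬ x ∈ absCenter G), A := by
            apply Finset.sum_le_sum
            intro x hx
            exact hstab_small x (Finset.mem_filter.mp hx).2
        _ = (g - l) * A := by
            rw [Finset.sum_const, smul_eq_mul]
            congr 1
            rw [Finset.filter_not, Finset.card_sdiff_of_subset (Finset.filter_subset _ _), hcardL,
              Finset.card_univ, hg, Nat.card_eq_fintype_card]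
  -- from hPr, get the exact nat equation
  have hkey : N * (p * q) = (p + q - 1) * (g * A) := by
    have hgA : ((g : ℚ) * (A : ℚ)) ≠ 0 := by
      positivity
    have hpq : ((p : ℚ) * (q : ℚ)) ≠ 0 := by positivity
    rw [autPr, div_eq_div_iff hgA hpq] at hPr
    have hcast : ((p : ℚ) + (q : ℚ) - 1) = ((p + q - 1 : ℕ) : ℚ) := by
      push_cast [Nat.cast_sub (by omega : 1 ≤ p + q)]
      ring
    rw [hcast] at hPr
    have hN' : (Nat.card {x : G × MulAut G // x.1⁻¹ * x.2 x.1 = 1}) = N := rfl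
    rw [hN'] at hPr
    exact_mod_cast hPr
  -- cancel A and l, derive n ≤ q
  have hmain : (p + q - 1) * g ≤ q * (l * p + (g - l)) := by
    have h1 : (p + q - 1) * (g * A) ≤ q * ((l * (p * A) + (g - l) * A)) := by
      rw [← hkey]
      calc N * (p * q) = q * (p * N) := by ring
        _ ≤ q * (l * (p * A) + (g - l) * A) := Nat.mul_le_mul_left q hbound
    have h2 : (p + q - 1) * g * A ≤ q * (l * p + (g - l)) * A := by
      calc (p + q - 1) * g * A = (p + q - 1) * (g * A) := by ring
        _ ≤ q * ((l * (p * A) + (g - l) * A)) := h1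
        _ = q * (l * p + (g - l)) * A := by ring
    exact Nat.le_of_mul_le_mul_right h2 hA0
  have hn1 : n ≠ 1 := fun h => hL (Subgroup.index_eq_one.mp h)
  have hn0 : n ≠ 0 := Subgroup.index_ne_zero_of_finite
  have hn1' : 1 ≤ n := Nat.one_le_iff_ne_zero.mpr hn0
  have hnq : n ≤ q := by
    have hmain' : (p + q - 1) * (l * n) ≤ q * (l * p + (l * n - l)) := by
      rw [hln]; exact hmain
    have hmain'' : (p + q - 1) * n ≤ q * (p + n - 1) := by
      have h3 : l * ((p + q - 1) * n) ≤ l * (q * (p + n - 1)) := by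
        calc l * ((p + q - 1) * n) = (p + q - 1) * (l * n) := by ring
          _ ≤ q * (l * p + (l * n - l)) := hmain'
          _ = q * (l * p + l * (n - 1)) := by
              rw [Nat.mul_sub, Nat.mul_one]
          _ = l * (q * (p + n - 1)) := by
              have h4 : p + n - 1 = p + (n - 1) := by omega
              rw [h4, Nat.mul_add, Nat.mul_add]
              ring
      exact Nat.le_of_mul_le_mul_left h3 hl0
    by_contra hcon
    push_neg at hcon
    have hz : ((p : ℤ) + q - 1) * n ≤ q * (p + n - 1) := by
      have h5 : 1 ≤ p + q := by omega
      have h6 : 1 ≤ p + n := by omega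
      zify [h5, h6] at hmain''
      exact hmain''
    have hcz : (q : ℤ) + 1 ≤ n := by exact_mod_cast hcon
    have hpz : (2 : ℤ) ≤ p := by exact_mod_cast hp2
    nlinarith [hz, hcz, hpz,
      mul_pos (show (0:ℤ) < (p:ℤ) - 1 by linarith) (show (0:ℤ) < (n:ℤ) - q by linarith)]
  have hrq : q ≤ n.minFac := by
    apply hqmin _ (n.minFac_prime hn1)
    exact (Nat.minFac_dvd n).trans (Subgroup.index_dvd_card _)
  have hneq : n = q := le_antisymm hnq
    (le_trans hrq (Nat.minFac_le (Nat.pos_of_ne_zero hn0)))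
  have hcard : Nat.card (G ⧸ absCenter G) = q := by
    rw [← Subgroup.index_eq_card, ← hn, hneq]
  refine ⟨?_, hcard⟩
  haveI : Fact q.Prime := ⟨hq⟩
  exact isCyclic_of_prime_card hcard
end

section
/- Let G be a finite non-abelian group, p the smallest prime dividing |Aut(G)|, and q the smallest prime dividing |G|. If Pr(G,Aut(G)) = (q² + p − 1)/(pq²), then G/L(G) ≅ ℤ_q × ℤ_q. -/
open MulAction

universe u

lemma helperVS {q : ℕ} [Fact q.Prime] {V : Type u} [AddCommGroup V]
    [Module (ZMod q) V] [Finite V] (hcard : Nat.card V = q ^ 2) :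
    Nonempty (V ≃+ (ZMod q × ZMod q)) := by
  haveI : Module.Finite (ZMod q) V := Module.Finite.of_finite
  have hfr : Module.finrank (ZMod q) V = 2 := by
    haveI : Fintype V := Fintype.ofFinite _
    have h1 : Fintype.card V = Fintype.card (ZMod q) ^ Module.finrank (ZMod q) V :=
      Module.card_eq_pow_finrank
    rw [ZMod.card, ← Nat.card_eq_fintype_card, hcard] at h1
    exact (Nat.pow_right_injective (Fact.out : q.Prime).two_le h1.symm)
  have hfr2 : Module.finrank (ZMod q) (ZMod q × ZMod q) = 2 := by
    simp [Module.finrank_prod]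
  obtain ⟨e⟩ := FiniteDimensional.nonempty_linearEquiv_of_finrank_eq
    (R := ZMod q) (M := V) (M' := ZMod q × ZMod q) (hfr.trans hfr2.symm)
  exact ⟨e.toAddEquiv⟩

lemma class_q2 {Q : Type u} [Group Q] [Finite Q] {q : ℕ} (hq : q.Prime)
    (hcard : Nat.card Q = q ^ 2) (hnc : ¬ IsCyclic Q) :
    Nonempty (Q ≃* Multiplicative (ZMod q × ZMod q)) := by
  haveI : Fact q.Prime := ⟨hq⟩
  have comm : ∀ a b : Q, a * b = b * a :=
    IsPGroup.commutative_of_card_eq_prime_sq hcard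
  have hq1 : ∀ x : Q, x ^ q = 1 := by
    intro x
    have hdvd : orderOf x ∣ q ^ 2 := hcard ▸ orderOf_dvd_natCard x
    have hne : orderOf x ≠ q ^ 2 := fun h => hnc
      (isCyclic_of_orderOf_eq_card x (by rw [h, hcard]))
    obtain ⟨k, hk, hkeq⟩ := (Nat.dvd_prime_pow hq).1 hdvd
    have hk1 : k ≤ 1 := by
      rcases Nat.lt_or_ge k 2 with h | h
      · omega
      · exact absurd (by rw [hkeq]; exact congrArg (q ^ ·) (le_antisymm hk h)) hne
    have : orderOf x ∣ q := by
      rw [hkeq]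
      exact dvd_trans (pow_dvd_pow q hk1) (by simp)
    exact orderOf_dvd_iff_pow_eq_one.1 this
  letI : CommGroup Q := { mul_comm := comm }
  haveI : NeZero q := ⟨hq.ne_zero⟩
  letI : Module (ZMod q) (Additive Q) := AddCommGroup.zmodModule (by
    intro x
    apply Additive.toMul.injective
    show Additive.toMul (q • x) = Additive.toMul (0 : Additive Q)
    rw [toMul_nsmul]; exact hq1 _)
  haveI : Finite (Additive Q) := ‹Finite Q›
  obtain ⟨e⟩ := helperVS (q := q) (V := Additive Q) hcard
  exact ⟨(MulEquiv.multiplicativeAdditive Q).symm.trans (AddEquiv.toMultiplicative e)⟩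

theorem stmt18 {G : Type*} [Group G] [Finite G] (hna : ∃ a b : G, a * b ≠ b * a)
    (p q : ℕ) (hp : p.Prime) (hpd : p ∣ Nat.card (MulAut G))
    (hpmin : ∀ r : ℕ, r.Prime → r ∣ Nat.card (MulAut G) → p ≤ r)
    (hq : q.Prime) (hqd : q ∣ Nat.card G)
    (hqmin : ∀ r : ℕ, r.Prime → r ∣ Nat.card G → q ≤ r)
    (hPr : autPr G 1 = ((q : ℚ) ^ 2 + (p : ℚ) - 1) / ((p : ℚ) * (q : ℚ) ^ 2)) :
    Nonempty ((G ⧸ absCenter G) ≃* Multiplicative (ZMod q × ZMod q)) := by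
  classical
  -- L ≤ center G
  have hLcen : absCenter G ≤ Subgroup.center G := by
    intro x hx
    rw [Subgroup.mem_center_iff]
    intro g
    have h := hx (MulAut.conj g)
    rw [MulAut.conj_apply] at h
    calc g * x = g * x * g⁻¹ * g := by group
      _ = x * g := by rw [h]
  -- quotient not cyclic
  have hnc : ¬ IsCyclic (G ⧸ absCenter G) := by
    intro hc
    obtain ⟨a, b, hab⟩ := hna
    letI := commGroupOfCyclicCenterQuotient (QuotientGroup.mk' (absCenter G))
      (by rw [QuotientGroup.ker_mk']; exact hLcen)
    exact hab (mul_comm a b)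
  -- notation
  haveI : Fintype G := Fintype.ofFinite G
  haveI : Fintype (MulAut G) := Fintype.ofFinite _
  set a := Nat.card (MulAut G) with ha
  set g := Nat.card G with hg
  set l := Nat.card (absCenter G) with hl
  set N := Nat.card {pr : G × MulAut G // pr.1⁻¹ * pr.2 pr.1 = 1} with hNdef
  have hapos : 0 < a := Nat.card_pos
  have hgpos : 0 < g := Nat.card_pos
  have hlpos : 0 < l := Nat.card_pos
  obtain ⟨p1, hp1⟩ : ∃ p1, p = p1 + 1 := ⟨p - 1, by have := hp.two_le; omega⟩
  have hp1pos : 0 < p1 := by have := hp.two_le; omega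
  -- the rational equation into ℕ
  have hPrN : N * (p * q ^ 2) = (q ^ 2 + p1) * (g * a) := by
    unfold autPr at hPr
    have hga : ((g : ℚ) * (a : ℚ)) ≠ 0 := by
      have h1 : (0:ℚ) < g := by exact_mod_cast hgpos
      have h2 : (0:ℚ) < a := by exact_mod_cast hapos
      positivity
    have hpq : ((p : ℚ) * (q : ℚ) ^ 2) ≠ 0 := by
      have h1 : (0:ℚ) < p := by exact_mod_cast hp.pos
      have h2 : (0:ℚ) < q := by exact_mod_cast hq.pos
      positivity
    rw [div_eq_div_iff hga hpq] at hPr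
    have hcast : ((q : ℚ) ^ 2 + (p : ℚ) - 1) = ((q ^ 2 + p1 : ℕ) : ℚ) := by
      push_cast [hp1]; ring
    rw [hcast] at hPr
    exact_mod_cast hPr
  -- counting: N = ∑ x, s x
  set s : G → ℕ := fun x => Nat.card {α : MulAut G // α x = x} with hs
  have hN : N = ∑ x : G, s x := by
    have e : {pr : G × MulAut G // pr.1⁻¹ * pr.2 pr.1 = 1}
        ≃ Σ x : G, {α : MulAut G // α x = x} :=
      (Equiv.subtypeProdEquivSigmaSubtype (fun (x : G) (α : MulAut G) => x⁻¹ * α x = 1)).trans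
        (Equiv.sigmaCongrRight fun x => Equiv.subtypeEquivRight (fun α => by
          rw [inv_mul_eq_one, eq_comm]))
    rw [hNdef, Nat.card_congr e, Nat.card_eq_fintype_card, Fintype.card_sigma]
    simp [hs, Nat.card_eq_fintype_card]
  -- bound for each x
  have hbound : ∀ x : G, p * s x ≤ a + p1 * (if x ∈ absCenter G then a else 0) := by
    intro x
    by_cases hx : x ∈ absCenter G
    · have hsx : s x = a := by
        rw [hs, ha]
        exact Nat.card_congr (Equiv.subtypeUnivEquiv (fun α => hx α))
      simp [hx, hsx, hp1, add_mul, one_mul, add_comm]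
    · simp only [hx, if_false, mul_zero, add_zero]
      set S := MulAction.stabilizer (MulAut G) x with hS
      have hsx : s x = Nat.card S := by
        apply Nat.card_congr
        exact Equiv.subtypeEquivRight (fun α => by
          rw [hS, MulAction.mem_stabilizer_iff, MulAut.smul_def])
      have hne : S ≠ ⊤ := by
        intro htop
        apply hx
        intro α
        have : α ∈ S := htop ▸ Subgroup.mem_top α
        rwa [hS, MulAction.mem_stabilizer_iff, MulAut.smul_def] at this
      have hidx1 : S.index ≠ 1 := fun h => hne (Subgroup.index_eq_one.1 h)
      have hidx0 : S.index ≠ 0 := Subgroup.index_ne_zero_of_finite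
      have hidx2 : 2 ≤ S.index := by omega
      have hple : p ≤ S.index := by
        have hmf : (S.index).minFac.Prime := Nat.minFac_prime hidx1
        have hdvd : (S.index).minFac ∣ a := (Nat.minFac_dvd _).trans S.index_dvd_card
        exact le_trans (hpmin _ hmf hdvd) (Nat.minFac_le (by omega))
      calc p * s x = p * Nat.card S := by rw [hsx]
        _ ≤ S.index * Nat.card S := Nat.mul_le_mul_right _ hple
        _ = a := S.index_mul_card
  -- summing
  have hsum : p * N ≤ g * a + p1 * (l * a) := by
    rw [hN, Finset.mul_sum]
    calc ∑ x : G, p * s x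
        ≤ ∑ x : G, (a + p1 * (if x ∈ absCenter G then a else 0)) :=
          Finset.sum_le_sum (fun x _ => hbound x)
      _ = g * a + p1 * (l * a) := by
          have h1 : ∑ i : G, (if i ∈ absCenter G then a else 0) = l * a := by
            rw [← Finset.sum_filter, Finset.sum_const, smul_eq_mul]
            congr 1
            rw [hl, Nat.card_eq_fintype_card, Fintype.card_subtype]
          rw [Finset.sum_add_distrib, Finset.sum_const, ← Finset.mul_sum, h1, smul_eq_mul,
            Finset.card_univ, hg, Nat.card_eq_fintype_card]
  -- deduce g ≤ q^2 * l
  have hgle : g ≤ q ^ 2 * l := by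
    have h1 : q ^ 2 * (p * N) = (q ^ 2 + p1) * (g * a) := by
      rw [← hPrN]; ring
    have h2 : q ^ 2 * (p * N) ≤ q ^ 2 * (g * a) + q ^ 2 * (p1 * (l * a)) := by
      calc q ^ 2 * (p * N) ≤ q ^ 2 * (g * a + p1 * (l * a)) :=
            Nat.mul_le_mul_left _ hsum
        _ = q ^ 2 * (g * a) + q ^ 2 * (p1 * (l * a)) := by ring
    have h3 : p1 * (g * a) ≤ q ^ 2 * (p1 * (l * a)) := by
      have : q ^ 2 * (g * a) + p1 * (g * a) ≤ q ^ 2 * (g * a) + q ^ 2 * (p1 * (l * a)) := by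
        calc q ^ 2 * (g * a) + p1 * (g * a) = (q ^ 2 + p1) * (g * a) := by ring
          _ = q ^ 2 * (p * N) := h1.symm
          _ ≤ _ := h2
      exact Nat.le_of_add_le_add_left this
    have h4 : p1 * (a * g) ≤ p1 * (a * (q ^ 2 * l)) := by
      calc p1 * (a * g) = p1 * (g * a) := by ring
        _ ≤ q ^ 2 * (p1 * (l * a)) := h3
        _ = p1 * (a * (q ^ 2 * l)) := by ring
    have h5 : a * g ≤ a * (q ^ 2 * l) := Nat.le_of_mul_le_mul_left h4 hp1pos
    exact Nat.le_of_mul_le_mul_left h5 hapos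
  -- the quotient order
  set n := Nat.card (G ⧸ absCenter G) with hn
  have hgln : g = n * l := Subgroup.card_eq_card_quotient_mul_card_subgroup _
  have hnle : n ≤ q ^ 2 := by
    have : n * l ≤ q ^ 2 * l := hgln ▸ hgle
    exact Nat.le_of_mul_le_mul_right this hlpos
  have hnpos : 0 < n := Nat.card_pos
  have hndvd : n ∣ g := ⟨l, hgln⟩
  have hqn : ∀ r : ℕ, r.Prime → r ∣ n → q ≤ r := fun r hr hd =>
    hqmin r hr (hd.trans hndvd)
  have hn1 : n ≠ 1 := by
    intro h
    haveI : Subsingleton (G ⧸ absCenter G) := (Nat.card_eq_one_iff_unique.mp h).1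
    exact hnc inferInstance
  have hnprime : ¬ n.Prime := by
    intro h
    haveI : Fact n.Prime := ⟨h⟩
    exact hnc (isCyclic_of_prime_card (p := n) rfl)
  have hneq : n = q ^ 2 := by
    have h2n : 2 ≤ n := by omega
    set m := n.minFac with hm
    have hmp : m.Prime := Nat.minFac_prime hn1
    obtain ⟨k, hk⟩ := n.minFac_dvd
    have hk1 : k ≠ 1 := fun h => hnprime (by rw [hk, h, mul_one]; exact hmp)
    have hk0 : k ≠ 0 := by
      intro h; rw [hk, h, mul_zero] at hnpos; exact absurd hnpos (lt_irrefl 0)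
    have hkmf : k.minFac.Prime := Nat.minFac_prime hk1
    have hqk : q ≤ k := le_trans
      (hqn _ hkmf ((Nat.minFac_dvd k).trans ⟨m, by rw [hk, mul_comm]⟩))
      (Nat.minFac_le (by omega))
    have hqm : q ≤ m := hqn m hmp n.minFac_dvd
    have : q ^ 2 ≤ n := by
      calc q ^ 2 = q * q := sq q
        _ ≤ m * k := Nat.mul_le_mul hqm hqk
        _ = n := hk.symm
    omega
  exact class_q2 hq hneq hnc
end

section
/- Let G be a finite group, p the smallest prime dividing |Aut(G)|, q the smallest prime dividing |G|, and suppose |Aut(G) : C_{Aut(G)}(x)| = p for all x ∈ G \ L(G). Then: (a) if G/L(G) ≅ ℤ_q, then Pr(G,Aut(G)) = (p+q−1)/(pq); (b) if G/L(G) ≅ ℤ_q × ℤ_q, then Pr(G,Aut(G)) = (q²+p−1)/(pq²). -/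
open MulAction

lemma count_fixed {G : Type*} [Group G] [Fintype G] :
    Nat.card {pr : G × MulAut G // pr.1⁻¹ * pr.2 pr.1 = (1 : G)} =
      ∑ x : G, Nat.card (stabilizer (MulAut G) x) := by
  classical
  have e1 : {pr : G × MulAut G // pr.1⁻¹ * pr.2 pr.1 = (1 : G)} ≃
      (x : G) × (stabilizer (MulAut G) x) :=
    (Equiv.subtypeEquivRight (fun pr => by
        rw [inv_mul_eq_one, eq_comm]
        rfl)).trans
      (Equiv.subtypeProdEquivSigmaSubtype (fun (x : G) (α : MulAut G) => α ∈ stabilizer (MulAut G) x))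
  rw [Nat.card_congr e1]
  have : ∀ x : G, Fintype (stabilizer (MulAut G) x) := fun x => Fintype.ofFinite _
  rw [Nat.card_eq_fintype_card, Fintype.card_sigma]
  exact Finset.sum_congr rfl fun x _ => (Nat.card_eq_fintype_card).symm


theorem stmt19 {G : Type*} [Group G] [Finite G]
    (p q : ℕ) (hp : p.Prime) (hpd : p ∣ Nat.card (MulAut G))
    (hpmin : ∀ r : ℕ, r.Prime → r ∣ Nat.card (MulAut G) → p ≤ r)
    (hq : q.Prime) (hqd : q ∣ Nat.card G)
    (hqmin : ∀ r : ℕ, r.Prime → r ∣ Nat.card G → q ≤ r)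
    (hstab : ∀ x : G, x ∉ absCenter G → (stabilizer (MulAut G) x).index = p) :
    (Nonempty ((G ⧸ absCenter G) ≃* Multiplicative (ZMod q)) →
      autPr G 1 = ((p : ℚ) + (q : ℚ) - 1) / ((p : ℚ) * (q : ℚ))) ∧
    (Nonempty ((G ⧸ absCenter G) ≃* Multiplicative (ZMod q × ZMod q)) →
      autPr G 1 = ((q : ℚ) ^ 2 + (p : ℚ) - 1) / ((p : ℚ) * (q : ℚ) ^ 2)) := by
  classical
  have : Fintype G := Fintype.ofFinite G
  set L := absCenter G with hL
  set a := Nat.card (MulAut G) with ha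
  set n := Nat.card G with hn
  set N := Nat.card {pr : G × MulAut G // pr.1⁻¹ * pr.2 pr.1 = (1 : G)} with hNd
  have ha0 : 0 < a := Nat.card_pos
  have hn0 : 0 < n := Nat.card_pos
  set l := Nat.card L with hl
  have hl0 : 0 < l := Nat.card_pos
  have hp0 : (0:ℚ) < p := by exact_mod_cast hp.pos
  have hq0 : (0:ℚ) < q := by exact_mod_cast hq.pos
  -- stabilizer cards
  have hstabL : ∀ x : G, x ∈ L → Nat.card (stabilizer (MulAut G) x) = a := by
    intro x hx
    have : stabilizer (MulAut G) x = ⊤ := by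
      ext α
      simp only [mem_stabilizer_iff, Subgroup.mem_top, iff_true]
      exact hx α
    rw [this, ha]
    exact Nat.card_congr Subgroup.topEquiv.toEquiv
  have hstabN : ∀ x : G, x ∉ L → p * Nat.card (stabilizer (MulAut G) x) = a := by
    intro x hx
    have h := Subgroup.index_mul_card (stabilizer (MulAut G) x)
    rw [hstab x hx] at h
    exact h
  -- key counting identity
  set m := (Finset.univ.filter (fun x : G => x ∉ L)).card with hm
  have hlm : l + m = n := by
    rw [hl, Nat.card_eq_fintype_card, Fintype.card_subtype, hm, hn, Nat.card_eq_fintype_card]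
    exact Finset.card_filter_add_card_filter_not _
  have hkey : p * N = l * (p * a) + m * a := by
    rw [hNd, count_fixed, Finset.mul_sum,
      ← Finset.sum_filter_add_sum_filter_not Finset.univ (fun x : G => x ∈ L)]
    congr 1
    · have hlc : (Finset.univ.filter (fun x : G => x ∈ L)).card = l := by
        rw [hl, Nat.card_eq_fintype_card, Fintype.card_subtype]
      rw [Finset.sum_congr rfl (fun x hx => by
        rw [hstabL x (Finset.mem_filter.mp hx).2]), Finset.sum_const, smul_eq_mul, hlc]
    · rw [Finset.sum_congr rfl (fun x hx => hstabN x (Finset.mem_filter.mp hx).2),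
        Finset.sum_const, smul_eq_mul]
  have hkeyQ : (p:ℚ) * N = l * (p * a) + m * a := by exact_mod_cast hkey
  have hmQ : (m:ℚ) = n - l := by
    have : (l:ℚ) + m = n := by exact_mod_cast hlm
    linarith
  have hpr : autPr G 1 = (N:ℚ) / (n * a) := rfl
  have ha0' : (a:ℚ) ≠ 0 := by positivity
  have hl0' : (l:ℚ) ≠ 0 := by positivity
  constructor
  · rintro ⟨e⟩
    have hnq : n = l * q := by
      have h1 : L.index = q := by
        rw [Subgroup.index_eq_card, Nat.card_congr e.toEquiv,
          Nat.card_congr Multiplicative.toAdd, Nat.card_zmod]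
      have := Subgroup.card_mul_index L
      rw [h1, ← hl, ← hn] at this
      omega
    have hnQ : (n:ℚ) = l * q := by exact_mod_cast hnq
    have hNQ : (N:ℚ) = ((l:ℚ) * (p * a) + ((l:ℚ) * q - l) * a) / p := by
      rw [eq_div_iff (ne_of_gt hp0)]
      linear_combination hkeyQ + (a:ℚ) * hmQ + (a:ℚ) * hnQ
    rw [hpr, hNQ, hnQ]
    field_simp
    ring
  · rintro ⟨e⟩
    have hnq : n = l * q ^ 2 := by
      have h1 : L.index = q ^ 2 := by
        rw [Subgroup.index_eq_card, Nat.card_congr e.toEquiv,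
          Nat.card_congr Multiplicative.toAdd, Nat.card_prod, Nat.card_zmod, sq]
      have := Subgroup.card_mul_index L
      rw [h1, ← hl, ← hn] at this
      omega
    have hnQ : (n:ℚ) = l * q ^ 2 := by exact_mod_cast hnq
    have hNQ : (N:ℚ) = ((l:ℚ) * (p * a) + ((l:ℚ) * q ^ 2 - l) * a) / p := by
      rw [eq_div_iff (ne_of_gt hp0)]
      linear_combination hkeyQ + (a:ℚ) * hmQ + (a:ℚ) * hnQ
    rw [hpr, hNQ, hnQ]
    field_simp
    ring
end
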